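/- arXiv:1309.5816 — 6 statements merged into one kernel-verified Lean document; each statement's English description precedes it below -/
import Mathlib

section
/- The map from 𝒮ⁿ (with the product topology) to 𝒮 sending an n-tuple of nonincreasing summable nonnegative sequences (s^{(1)}, …, s^{(n)}) to the decreasing rearrangement of the combined collection {s_j^{(i)} : 1 ≤ i ≤ n, j ≥ 1} is continuous. -/
/-!
For `s ∈ 𝒮` and `t > 0` the set `{j | t < s j}` is the initial segment `[0, N_s t)`, where
`N_s t` counts the entries of `s` above `t`. Integrating the layer-cake identity
`|a - b| = vol {t > 0 | (t < a) ≠ (t < b)}` over all coordinates gives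
`‖s - s'‖₁ = ∫_{t > 0} |N_s t - N_{s'} t| dt`. As `N_{merge x} = ∑ i, N_{x i}`, the triangle
inequality under the integral yields `‖merge x - merge y‖₁ ≤ ∑ i, ‖x i - y i‖₁`, so `merge` is
Lipschitz.
-/

open Filter Topology

/-- The space `𝒮` of nonincreasing summable sequences of nonnegative reals,
realised as a subset of `ℓ¹`, so that it inherits the `ℓ¹` (induced) topology. -/
def FragS : Set (lp (fun _ : ℕ => ℝ) 1) :=
  {f | Antitone (f : ℕ → ℝ) ∧ ∀ i, 0 ≤ (f : ℕ → ℝ) i}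

open MeasureTheory Set
open scoped ENNReal

-- `ncard` is `0` on infinite sets: this is the true count only if finitely many `f j` exceed `t`.
noncomputable def levelCount (f : ℕ → ℝ) (t : ℝ) : ℕ := {j | t < f j}.ncard

lemma Antitone.lt_apply_iff_lt_levelCount {f : ℕ → ℝ} (hf : Antitone f) {t : ℝ}
    (ht : ∃ k, f k ≤ t) (j : ℕ) : t < f j ↔ j < levelCount f t := by
  classical
  have h : {j | t < f j} = Iio (Nat.find ht) := by
    ext j
    rw [mem_Iio]
    refine ⟨fun hj => ?_, fun hj => not_le.1 (Nat.find_min ht hj)⟩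
    by_contra! hle
    exact ((hf hle).trans (Nat.find_spec ht)).not_gt hj
  rw [levelCount, h, ncard_Iio_nat]
  exact Set.ext_iff.1 h j

lemma encard_setOf_lt_ne_lt (a b : ℕ) :
    ({j : ℕ | (j < a) ≠ (j < b)}.encard : ℝ≥0∞) = ENNReal.ofReal |(a : ℝ) - b| := by
  wlog h : a ≤ b generalizing a b
  · rw [abs_sub_comm, ← this b a (by omega)]
    simp only [ne_comm]
  have hIco : {j : ℕ | (j < a) ≠ (j < b)} = Ico a b := by
    ext j
    simp only [mem_ofPred_eq, mem_Ico, ne_eq, eq_iff_iff]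
    omega
  rw [hIco, ← (finite_Ico a b).cast_ncard_eq, ncard_Ico_nat, abs_sub_comm,
    abs_of_nonneg (sub_nonneg.2 (Nat.cast_le.2 h)), ← Nat.cast_sub h, ENNReal.ofReal_natCast]
  rfl

lemma setOf_lt_ne_lt_eq_Ico (a b : ℝ) :
    {t : ℝ | (t < a) ≠ (t < b)} = Ico (min a b) (max a b) := by
  ext t
  by_cases ha : t < a <;> by_cases hb : t < b <;>
    simp [ha, hb, not_lt.1]

lemma lintegral_indicator_lt_ne_lt {a b : ℝ} (ha : 0 ≤ a) (hb : 0 ≤ b) :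
    ∫⁻ t in Ioi 0, {t : ℝ | (t < a) ≠ (t < b)}.indicator 1 t = ENNReal.ofReal |a - b| := by
  rw [Measure.restrict_congr_set Ioi_ae_eq_Ici, setOf_lt_ne_lt_eq_Ico,
    lintegral_indicator_one measurableSet_Ico, Measure.restrict_apply measurableSet_Ico,
    inter_eq_left.2 (Ico_subset_Ici_self.trans (Ici_subset_Ici.2 (le_min ha hb))),
    Real.volume_Ico, max_sub_min_eq_abs']

lemma ofReal_tsum_abs_sub_eq_lintegral_encard {u v : ℕ → ℝ} (hu : ∀ j, 0 ≤ u j)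
    (hv : ∀ j, 0 ≤ v j) (huv : Summable fun j => |u j - v j|) :
    ENNReal.ofReal (∑' j, |u j - v j|) =
      ∫⁻ t in Ioi 0, ({j | (t < u j) ≠ (t < v j)}.encard : ℝ≥0∞) := by
  calc ENNReal.ofReal (∑' j, |u j - v j|)
      = ∑' j, ∫⁻ t in Ioi 0, {t : ℝ | (t < u j) ≠ (t < v j)}.indicator 1 t := by
        rw [ENNReal.ofReal_tsum_of_nonneg (fun _ => abs_nonneg _) huv]
        exact tsum_congr fun j => (lintegral_indicator_lt_ne_lt (hu j) (hv j)).symm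
    _ = ∫⁻ t in Ioi 0, ∑' j, {t : ℝ | (t < u j) ≠ (t < v j)}.indicator 1 t := by
        refine (lintegral_tsum fun j => (measurable_const.indicator ?_).aemeasurable).symm
        exact setOf_lt_ne_lt_eq_Ico _ _ ▸ measurableSet_Ico
    _ = _ := by
        congr 1
        funext t
        rw [← ENNReal.tsum_set_one]
        exact (tsum_subtype {j | (t < u j) ≠ (t < v j)} fun _ => 1).symm

lemma lp.exists_apply_le_of_pos (f : lp (fun _ : ℕ => ℝ) 1) {t : ℝ} (ht : 0 < t) :
    ∃ k, (f : ℕ → ℝ) k ≤ t :=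
  ((lp.memℓp f).summable_of_one.tendsto_atTop_zero.eventually (gt_mem_nhds ht)).exists.imp
    fun _ => le_of_lt

lemma lp.norm_sub_eq_tsum_abs_sub {α : Type*} (f g : lp (fun _ : α => ℝ) 1) :
    ‖f - g‖ = ∑' j, |(f : α → ℝ) j - (g : α → ℝ) j| := by
  simpa [lp.coeFn_sub] using lp.norm_eq_tsum_rpow (p := 1) (by norm_num) (f - g)

lemma lp.summable_abs_sub {α : Type*} (f g : lp (fun _ : α => ℝ) 1) :
    Summable fun j => |(f : α → ℝ) j - (g : α → ℝ) j| := by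
  simpa [lp.coeFn_sub] using (lp.memℓp (f - g)).summable (p := 1) (by norm_num)

lemma FragS.lt_apply_iff_lt_levelCount {f : lp (fun _ : ℕ => ℝ) 1} (hf : f ∈ FragS)
    {t : ℝ} (ht : 0 < t) (j : ℕ) : t < (f : ℕ → ℝ) j ↔ j < levelCount f t :=
  hf.1.lt_apply_iff_lt_levelCount (lp.exists_apply_le_of_pos f ht) j

lemma FragS.antitoneOn_levelCount {f : lp (fun _ : ℕ => ℝ) 1} (hf : f ∈ FragS) :
    AntitoneOn (levelCount f) (Ioi 0) := by
  intro s hs t ht hst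
  rw [← Iio_subset_Iio_iff]
  intro j hj
  rw [mem_Iio, ← FragS.lt_apply_iff_lt_levelCount hf ht] at hj
  rw [mem_Iio, ← FragS.lt_apply_iff_lt_levelCount hf hs]
  exact hst.trans_lt hj

lemma FragS.edist_eq_lintegral_levelCount {f g : lp (fun _ : ℕ => ℝ) 1} (hf : f ∈ FragS)
    (hg : g ∈ FragS) :
    edist f g = ∫⁻ t in Ioi 0, ENNReal.ofReal |(levelCount f t : ℝ) - levelCount g t| := by
  rw [edist_dist, dist_eq_norm, lp.norm_sub_eq_tsum_abs_sub,
    ofReal_tsum_abs_sub_eq_lintegral_encard hf.2 hg.2 (lp.summable_abs_sub f g)]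
  refine setLIntegral_congr_fun measurableSet_Ioi fun t ht => ?_
  simp only [FragS.lt_apply_iff_lt_levelCount hf ht,
    FragS.lt_apply_iff_lt_levelCount hg ht, encard_setOf_lt_ne_lt]

lemma FragS.edist_le_sum_edist_of_levelCount_eq_sum {ι : Type*} [Fintype ι]
    {F G : lp (fun _ : ℕ => ℝ) 1} {f g : ι → lp (fun _ : ℕ => ℝ) 1}
    (hF : F ∈ FragS) (hG : G ∈ FragS) (hf : ∀ i, f i ∈ FragS) (hg : ∀ i, g i ∈ FragS)
    (hFf : ∀ t, 0 < t → levelCount F t = ∑ i, levelCount (f i) t)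
    (hGg : ∀ t, 0 < t → levelCount G t = ∑ i, levelCount (g i) t) :
    edist F G ≤ ∑ i, edist (f i) (g i) := by
  simp only [FragS.edist_eq_lintegral_levelCount hF hG,
    FragS.edist_eq_lintegral_levelCount (hf _) (hg _)]
  have hmeas (i : ι) : AEMeasurable
      (fun t => ENNReal.ofReal |(levelCount (f i) t : ℝ) - levelCount (g i) t|)
      (volume.restrict (Ioi 0)) := by
    have h₁ := aemeasurable_restrict_of_antitoneOn (μ := volume) measurableSet_Ioi
      ((Nat.mono_cast (α := ℝ)).comp_antitoneOn (FragS.antitoneOn_levelCount (hf i)))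
    have h₂ := aemeasurable_restrict_of_antitoneOn (μ := volume) measurableSet_Ioi
      ((Nat.mono_cast (α := ℝ)).comp_antitoneOn (FragS.antitoneOn_levelCount (hg i)))
    exact ENNReal.measurable_ofReal.comp_aemeasurable (h₁.sub h₂).abs
  rw [← lintegral_finsetSum' _ fun i _ => hmeas i]
  refine setLIntegral_mono' measurableSet_Ioi fun t ht => ?_
  rw [hFf t ht, hGg t ht, ← ENNReal.ofReal_sum_of_nonneg fun _ _ => abs_nonneg _]
  push_cast
  rw [← Finset.sum_sub_distrib]
  exact ENNReal.ofReal_le_ofReal (Finset.abs_sum_le_sum_abs _ _)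

/-- The map from `𝒮ⁿ` (product topology) to `𝒮` sending an `n`-tuple of nonincreasing
summable nonnegative sequences to the decreasing rearrangement of the combined
collection `{s_j^{(i)} : 1 ≤ i ≤ n, j ≥ 1}` is continuous.  The map `merge` is
characterised by equimeasurability: for every level `t > 0`, the number of entries of
`merge x` above `t` equals the total number of entries of the `x i` above `t`. -/
theorem stmt1 (n : ℕ)
    (merge : (Fin n → FragS) → FragS)
    (hmerge : ∀ (x : Fin n → FragS) (t : ℝ), 0 < t →
      {j | t < ((merge x : lp (fun _ : ℕ => ℝ) 1) : ℕ → ℝ) j}.ncard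
        = ∑ i : Fin n, {j | t < ((x i : lp (fun _ : ℕ => ℝ) 1) : ℕ → ℝ) j}.ncard) :
    Continuous merge := by
  refine LipschitzWith.continuous (K := n) fun x y => ?_
  calc edist (merge x) (merge y)
      ≤ ∑ i, edist (x i) (y i) :=
        FragS.edist_le_sum_edist_of_levelCount_eq_sum (merge x).2 (merge y).2 (fun i => (x i).2)
          (fun i => (y i).2) (hmerge x) (hmerge y)
    _ ≤ ∑ _i : Fin n, edist x y := Finset.sum_le_sum fun i _ => edist_le_pi_edist x y i
    _ = n * edist x y := by simp
end

section
/- Let N(n) be a delayed renewal process on the nonnegative integers with delay τ₀ and i.i.d. inter-arrival times τ_{k+1} − τ_k (k ≥ 0), independent of τ₀, where N(n) = #{k ≥ 1 : τ_k ≤ n}. Suppose both τ₀ and τ₁ − τ₀ have exponential tails, i.e., E[r^{τ₀}] < ∞ and E[r^{τ₁−τ₀}] < ∞ for some r > 1. Then for any s ∈ (0,1), limsup_{n→∞} (1/n) log E[s^{N(n)}] < 0. -/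
/-!
If the `m`-th arrival `τ m` has happened by time `n`, then `N n ≥ m` and `s ^ N n ≤ s ^ m`;
otherwise `τ m > n`, which by Markov's inequality has probability at most
`E[r ^ τ m] / r ^ (n + 1) = E[r ^ τ₀] E[r ^ (τ₁ - τ₀)] ^ m / r ^ (n + 1)`, the product coming from
independence of the increments. Choosing `m` a suitable fixed fraction of `n` makes both terms
exponentially small in `n`.
-/

open MeasureTheory ProbabilityTheory Filter Topology

noncomputable def arrivalCount (τ : ℕ → ℕ) (n : ℕ) : ℕ := {k | 1 ≤ k ∧ τ k ≤ n}.ncard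

section arrivalCount

variable {τ : ℕ → ℕ}

lemma setOf_arrival_subset_Icc (hτ : StrictMono τ) (n : ℕ) :
    {k | 1 ≤ k ∧ τ k ≤ n} ⊆ Set.Icc 1 n :=
  fun k hk => ⟨hk.1, (hτ.id_le k).trans hk.2⟩

lemma arrivalCount_le (hτ : StrictMono τ) (n : ℕ) : arrivalCount τ n ≤ n :=
  calc arrivalCount τ n ≤ (Set.Icc 1 n).ncard :=
        Set.ncard_le_ncard (setOf_arrival_subset_Icc hτ n) (Set.finite_Icc 1 n)
    _ = n := by simp

lemma le_arrivalCount (hτ : StrictMono τ) {m n : ℕ} (h : τ m ≤ n) : m ≤ arrivalCount τ n :=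
  calc m = (Set.Icc 1 m).ncard := by simp
    _ ≤ arrivalCount τ n :=
        Set.ncard_le_ncard (fun k hk => ⟨hk.1, (hτ.monotone hk.2).trans h⟩)
          ((Set.finite_Icc 1 n).subset (setOf_arrival_subset_Icc hτ n))

lemma arrivalCount_eq_sum (hτ : StrictMono τ) (n : ℕ) :
    arrivalCount τ n = ∑ k ∈ Finset.Icc 1 n, if τ k ≤ n then 1 else 0 := by
  rw [← Finset.card_filter, arrivalCount, ← Set.ncard_coe_finset]
  congr 1
  ext k
  simpa using fun h _ => (hτ.id_le k).trans h

lemma strictMono_sum_range_succ {g : ℕ → ℕ} (hpos : ∀ k, 1 ≤ g (k + 1)) :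
    StrictMono fun k => ∑ i ∈ Finset.range (k + 1), g i :=
  strictMono_nat_of_lt_succ fun k => by
    rw [Finset.sum_range_succ _ (k + 1)]
    exact Nat.lt_add_of_pos_right (hpos k)

lemma measurable_arrivalCount {Ω : Type*} [MeasurableSpace Ω] {τ : ℕ → Ω → ℕ}
    (hmeas : ∀ k, Measurable (τ k)) (hτ : ∀ ω, StrictMono (τ · ω)) (n : ℕ) :
    Measurable fun ω => arrivalCount (τ · ω) n := by
  simp_rw [arrivalCount_eq_sum (hτ _)]
  exact Finset.measurable_sum _ fun k _ =>
    Measurable.ite (measurableSet_le (hmeas k) measurable_const) measurable_const measurable_const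

end arrivalCount

section

variable {Ω ι : Type*} [MeasurableSpace Ω] {μ : Measure Ω} {r : ℝ}

lemma ProbabilityTheory.iIndepFun.integrable_pow_sum {g : ι → Ω → ℕ} (hindep : iIndepFun g μ)
    (hmeas : ∀ i, Measurable (g i)) (hr : 0 < r) {s : Finset ι}
    (hint : ∀ i ∈ s, Integrable (fun ω => r ^ g i ω) μ) :
    Integrable (fun ω => r ^ ∑ i ∈ s, g i ω) μ := by
  have := hindep.isProbabilityMeasure
  simp_rw [← Real.rpow_natCast, Real.rpow_def_of_pos hr] at hint ⊢
  have hindep_cast := hindep.comp (fun _ => ((↑) : ℕ → ℝ)) fun _ => measurable_from_top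
  simpa [Finset.sum_apply] using
    hindep_cast.integrable_exp_mul_sum (fun i => measurable_from_top.comp (hmeas i)) hint

lemma ProbabilityTheory.iIndepFun.integral_pow_sum {g : ι → Ω → ℕ} (hindep : iIndepFun g μ)
    (hmeas : ∀ i, Measurable (g i)) (hr : 0 < r) (s : Finset ι) :
    ∫ ω, r ^ ∑ i ∈ s, g i ω ∂μ = ∏ i ∈ s, ∫ ω, r ^ g i ω ∂μ := by
  simp_rw [← Real.rpow_natCast, Real.rpow_def_of_pos hr]
  have hindep_cast := hindep.comp (fun _ => ((↑) : ℕ → ℝ)) fun _ => measurable_from_top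
  simpa [mgf, Finset.sum_apply] using
    hindep_cast.mgf_sum (fun i => measurable_from_top.comp (hmeas i)) s (t := Real.log r)

lemma integrable_pow_sum_range_and_integral_eq {g : ℕ → Ω → ℕ} (hindep : iIndepFun g μ)
    (hmeas : ∀ i, Measurable (g i)) (hident : ∀ k, IdentDistrib (g (k + 1)) (g 1) μ μ)
    (hr : 0 < r) (hint₀ : Integrable (fun ω => r ^ g 0 ω) μ)
    (hint₁ : Integrable (fun ω => r ^ g 1 ω) μ) (m : ℕ) :
    Integrable (fun ω => r ^ ∑ i ∈ Finset.range (m + 1), g i ω) μ ∧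
      ∫ ω, r ^ ∑ i ∈ Finset.range (m + 1), g i ω ∂μ =
        (∫ ω, r ^ g 0 ω ∂μ) * (∫ ω, r ^ g 1 ω ∂μ) ^ m := by
  have hident_pow : ∀ k, IdentDistrib (fun ω => r ^ g (k + 1) ω) (fun ω => r ^ g 1 ω) μ μ :=
    fun k => (hident k).comp (measurable_from_top : Measurable fun k : ℕ => r ^ k)
  have hint : ∀ i, Integrable (fun ω => r ^ g i ω) μ
    | 0 => hint₀
    | k + 1 => (hident_pow k).integrable_iff.mpr hint₁
  refine ⟨hindep.integrable_pow_sum hmeas hr fun i _ => hint i, ?_⟩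
  rw [hindep.integral_pow_sum hmeas hr, Finset.prod_range_succ', mul_comm]
  simp [(hident_pow _).integral_eq]

lemma measureReal_le_le_integral_pow_div (hr : 1 < r) {T : Ω → ℕ}
    (hint : Integrable (fun ω => r ^ T ω) μ) (n : ℕ) :
    μ.real {ω | n ≤ T ω} ≤ (∫ ω, r ^ T ω ∂μ) / r ^ n := by
  have hmarkov := mul_meas_ge_le_integral_of_nonneg
    (ae_of_all _ fun ω => by positivity) hint (r ^ n)
  simp_rw [pow_le_pow_iff_right₀ hr] at hmarkov
  rw [le_div_iff₀ (by positivity), mul_comm]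
  exact hmarkov

lemma integral_pow_le_pow_add_measureReal [IsProbabilityMeasure μ] {N T : Ω → ℕ} {s : ℝ}
    (hs₀ : 0 ≤ s) (hs₁ : s ≤ 1) (hT : Measurable T) {m n : ℕ}
    (hNT : ∀ ω, T ω ≤ n → m ≤ N ω) :
    ∫ ω, s ^ N ω ∂μ ≤ s ^ m + μ.real {ω | n < T ω} := by
  have hset : MeasurableSet {ω | n < T ω} := measurableSet_le measurable_const hT
  have hpointwise : ∀ ω, s ^ N ω ≤ s ^ m + {ω | n < T ω}.indicator (fun _ => (1 : ℝ)) ω := by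
    intro ω
    by_cases h : ω ∈ {ω | n < T ω}
    · rw [Set.indicator_of_mem h]
      linarith [pow_le_one₀ hs₀ hs₁ (n := N ω), pow_nonneg hs₀ m]
    · rw [Set.indicator_of_notMem h, add_zero]
      exact pow_le_pow_of_le_one hs₀ hs₁ (hNT ω (not_lt.mp h))
  calc ∫ ω, s ^ N ω ∂μ ≤ ∫ ω, s ^ m + {ω | n < T ω}.indicator (fun _ => (1 : ℝ)) ω ∂μ :=
        integral_mono_of_nonneg (ae_of_all _ fun ω => by positivity)
          ((integrable_const _).add ((integrable_const (1 : ℝ)).indicator hset))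
          (ae_of_all _ hpointwise)
    _ = s ^ m + μ.real {ω | n < T ω} := by
        rw [integral_add (integrable_const _) ((integrable_const (1 : ℝ)).indicator hset),
          integral_indicator_const _ hset]
        simp

lemma pow_le_integral_pow [IsProbabilityMeasure μ] {N : Ω → ℕ} {s : ℝ} (hs₀ : 0 ≤ s)
    (hs₁ : s ≤ 1) (hN : Measurable N) {n : ℕ} (hle : ∀ ω, N ω ≤ n) :
    s ^ n ≤ ∫ ω, s ^ N ω ∂μ := by
  have hint : Integrable (fun ω => s ^ N ω) μ :=
    .of_bound (measurable_from_top.comp hN).aestronglyMeasurable 1 (ae_of_all _ fun ω => by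
      rw [Real.norm_of_nonneg (by positivity)]; exact pow_le_one₀ hs₀ hs₁)
  calc s ^ n = ∫ _, s ^ n ∂μ := by simp
    _ ≤ ∫ ω, s ^ N ω ∂μ :=
      integral_mono (integrable_const _) hint fun ω => pow_le_pow_of_le_one hs₀ hs₁ (hle ω)

end

lemma exists_le_mul_exp_of_le_pow_add_pow_div {a : ℕ → ℝ} {s r A B : ℝ} (hs₀ : 0 < s)
    (hs₁ : s < 1) (hr : 1 < r) (hA : 0 ≤ A) (hB : 1 < B)
    (h : ∀ m n : ℕ, a n ≤ s ^ m + A * B ^ m / r ^ (n + 1)) :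
    ∃ C c : ℝ, 0 < C ∧ c < 0 ∧ ∀ n : ℕ, a n ≤ C * Real.exp (c * n) := by
  have ht : 0 < Real.log r := Real.log_pos hr
  have hL : 0 < Real.log B := Real.log_pos hB
  set δ := Real.log r / (2 * Real.log B)
  -- `B ^ δ = √r`, so with `m = ⌈δ n⌉` the second term decays like `r ^ (-n / 2)`.
  have hδ : δ * Real.log B = Real.log r / 2 := by simp only [δ]; field_simp
  set c := max (δ * Real.log s) (-(Real.log r / 2))
  have hc : c < 0 :=
    max_lt (mul_neg_of_pos_of_neg (by positivity) (Real.log_neg hs₀ hs₁)) (by linarith)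
  refine ⟨1 + A * B, c, by positivity, hc, fun n => ?_⟩
  set m := ⌈δ * n⌉₊
  have hm₁ : δ * n ≤ m := Nat.le_ceil _
  have hm₂ : (m : ℝ) < δ * n + 1 := Nat.ceil_lt_add_one (by positivity)
  have hn : (0 : ℝ) ≤ n := n.cast_nonneg
  have hsm : s ^ m ≤ Real.exp (c * n) := by
    rw [← Real.rpow_natCast, Real.rpow_def_of_pos hs₀, Real.exp_le_exp]
    nlinarith [mul_le_mul_of_nonneg_right (le_max_left (δ * Real.log s) (-(Real.log r / 2))) hn,
      Real.log_neg hs₀ hs₁]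
  have hBm : B ^ m / r ^ (n + 1) ≤ B * Real.exp (c * n) := by
    rw [← Real.rpow_natCast, ← Real.rpow_natCast, Real.rpow_def_of_pos (by linarith),
      Real.rpow_def_of_pos (by linarith), ← Real.exp_sub, ← Real.exp_log (by linarith : 0 < B),
      ← Real.exp_add, Real.exp_log (by linarith : 0 < B), Real.exp_le_exp]
    push_cast
    nlinarith [mul_le_mul_of_nonneg_right (le_max_right (δ * Real.log s) (-(Real.log r / 2))) hn]
  calc a n ≤ s ^ m + A * B ^ m / r ^ (n + 1) := h m n
    _ ≤ Real.exp (c * n) + A * (B * Real.exp (c * n)) := by rw [mul_div_assoc]; gcongr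
    _ = (1 + A * B) * Real.exp (c * n) := by ring

lemma limsup_inv_mul_log_le {a : ℕ → ℝ} {s C c : ℝ} (hs : 0 < s) (hlow : ∀ n, s ^ n ≤ a n)
    (hC : 0 < C) (hup : ∀ n, a n ≤ C * Real.exp (c * n)) :
    limsup (fun n : ℕ => 1 / (n : ℝ) * Real.log (a n)) atTop ≤ c := by
  have htend : Tendsto (fun n : ℕ => Real.log C / n + c) atTop (𝓝 c) := by
    simpa using (tendsto_const_div_atTop_nhds_zero_nat (Real.log C)).add_const c
  refine (limsup_le_limsup ?_ ?_ htend.isBoundedUnder_le).trans_eq htend.limsup_eq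
  · filter_upwards [eventually_gt_atTop 0] with n hn
    have hlog : Real.log (a n) ≤ Real.log C + c * n := by
      rw [← Real.log_exp (c * n), ← Real.log_mul hC.ne' (Real.exp_pos _).ne']
      exact Real.log_le_log ((pow_pos hs n).trans_le (hlow n)) (hup n)
    calc 1 / (n : ℝ) * Real.log (a n) ≤ 1 / n * (Real.log C + c * n) := by gcongr
      _ = Real.log C / n + c := by field_simp
  · refine isCoboundedUnder_le_of_eventually_le atTop (x := Real.log s) ?_
    filter_upwards [eventually_gt_atTop 0] with n hn
    have hlog : n * Real.log s ≤ Real.log (a n) := by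
      rw [← Real.log_pow]
      exact Real.log_le_log (pow_pos hs n) (hlow n)
    rw [one_div_mul_eq_div, le_div_iff₀' (by positivity)]
    exact hlog

/-- Exponential decay of `E[s^{N(n)}]` for a delayed renewal process whose delay `g 0`
and i.i.d. inter-arrival times `g (k+1)` (independent of the delay) have exponential
tails.  Here `τ k = g 0 + g 1 + ⋯ + g k` are the arrival times and
`N n = #{k ≥ 1 : τ k ≤ n}`. -/
theorem stmt3
    {Ω : Type*} [MeasurableSpace Ω] (μ : Measure Ω) [IsProbabilityMeasure μ]
    (g : ℕ → Ω → ℕ)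
    (hmeas : ∀ k, Measurable (g k))
    (hindep : iIndepFun g μ)
    (hident : ∀ k, IdentDistrib (g (k + 1)) (g 1) μ μ)
    (hpos : ∀ k ω, 1 ≤ g (k + 1) ω)
    (τ : ℕ → Ω → ℕ) (hτ : ∀ k ω, τ k ω = ∑ i ∈ Finset.range (k + 1), g i ω)
    (N : ℕ → Ω → ℕ) (hN : ∀ n ω, N n ω = {k | 1 ≤ k ∧ τ k ω ≤ n}.ncard)
    (htail : ∃ r : ℝ, 1 < r ∧ Integrable (fun ω => r ^ g 0 ω) μ ∧
      Integrable (fun ω => r ^ g 1 ω) μ) :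
    ∀ s : ℝ, 0 < s → s < 1 →
      Filter.limsup (fun n : ℕ => (1 / (n : ℝ)) * Real.log (∫ ω, s ^ N n ω ∂μ))
        atTop < 0 := by
  intro s hs₀ hs₁
  obtain ⟨r, hr, hint₀, hint₁⟩ := htail
  obtain rfl : N = fun n ω => arrivalCount (τ · ω) n := funext₂ hN
  have hτ_strictMono : ∀ ω, StrictMono (τ · ω) := fun ω => by
    simpa only [hτ] using strictMono_sum_range_succ (hpos · ω)
  have hτ_meas : ∀ k, Measurable (τ k) := fun k => by
    rw [funext (hτ k)]
    fun_prop
  have hmoment := integrable_pow_sum_range_and_integral_eq hindep hmeas hident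
    (by linarith) hint₀ hint₁
  simp_rw [← hτ] at hmoment
  set A := ∫ ω, r ^ g 0 ω ∂μ
  set B := ∫ ω, r ^ g 1 ω ∂μ
  have hB : 1 < B := hr.trans_le <| by
    simpa using integral_mono (integrable_const r) hint₁ fun ω =>
      le_self_pow₀ hr.le (Nat.one_le_iff_ne_zero.mp (hpos 0 ω))
  have hbound : ∀ m n : ℕ,
      ∫ ω, s ^ arrivalCount (τ · ω) n ∂μ ≤ s ^ m + A * B ^ m / r ^ (n + 1) :=
    fun m n => (integral_pow_le_pow_add_measureReal hs₀.le hs₁.le (hτ_meas m) fun ω h =>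
      le_arrivalCount (hτ_strictMono ω) h).trans <| by
        rw [← (hmoment m).2]
        gcongr
        exact measureReal_le_le_integral_pow_div hr (hmoment m).1 (n + 1)
  obtain ⟨C, c, hC, hc, hdecay⟩ := exists_le_mul_exp_of_le_pow_add_pow_div hs₀ hs₁ hr
    (integral_nonneg fun ω => by positivity) hB hbound
  refine (limsup_inv_mul_log_le hs₀ (fun n => ?_) hC hdecay).trans_lt hc
  exact pow_le_integral_pow hs₀.le hs₁.le (measurable_arrivalCount hτ_meas hτ_strictMono n)
    fun ω => arrivalCount_le (hτ_strictMono ω) n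
end

section
/- Consider a delayed renewal process with arrival times τ₀ < τ₁ < ⋯, where τ₀ and the i.i.d. inter-arrival times have exponential tails. Suppose each inter-arrival interval is independently marked, with indicator I_k depending only on the interval length τ_k − τ_{k−1}, and q := P(I₁ = 1) > 0. Then the counting process M(n) = #{k ≥ 1 : τ_k ≤ n, I_k = 1} of marked renewals is itself a delayed renewal process whose delay and inter-arrival distributions have exponential tails; consequently, for any s ∈ (0,1), limsup_{n→∞} (1/n) log E[s^{M(n)}] < 0. -/
/-!
Let `u = 1 - q + q s < 1`. On the event `τ_K ≤ n` the first `K` marks are all counted in `M n`,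
so `E[s ^ M n] ≤ u ^ K + P(τ_K > n) ≤ u ^ K + E[r ^ τ₀] E[r ^ (τ₁ - τ₀)] ^ K r ^ (-n)` by
independence and Markov's inequality. Taking `K` a small multiple of `n` makes both terms
exponentially small in `n`, which gives the `limsup`. At `s = 1 / 2`, Markov's inequality turns
this into geometric tails for `P(M v ≤ j) ≥ P(ρ j > v)`, so every `ρ j`, and with it
`ρ 1 - ρ 0 ≤ ρ 1`, has exponential tails.
-/

open MeasureTheory ProbabilityTheory Filter Topology Finset

noncomputable section

/-- A realization of the marked intervals: `x k = (τ_k - τ_{k-1}, I_k)` for `k ≥ 1` and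
`(x 0).1 = τ_0`; the mark `(x 0).2` is never read. -/
def renewalTime (x : ℕ → ℕ × Bool) (k : ℕ) : ℕ := ∑ i ∈ range (k + 1), (x i).1

def markedCount (x : ℕ → ℕ × Bool) (n : ℕ) : ℕ :=
  {k | 1 ≤ k ∧ renewalTime x k ≤ n ∧ (x k).2 = true}.ncard

def markedArrival (x : ℕ → ℕ × Bool) (j : ℕ) : ℕ := sInf {n | j + 1 ≤ markedCount x n}

end

section Deterministic

variable {x : ℕ → ℕ × Bool}

lemma renewalTime_strictMono (hx : ∀ k, 1 ≤ (x (k + 1)).1) : StrictMono (renewalTime x) :=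
  strictMono_nat_of_lt_succ fun k => by
    simp only [renewalTime, sum_range_succ _ (k + 1)]
    have := hx k
    omega

lemma markedCount_eq_card (hx : ∀ k, 1 ≤ (x (k + 1)).1) (n : ℕ) :
    markedCount x n = #{k ∈ Icc 1 n | renewalTime x k ≤ n ∧ (x k).2 = true} := by
  rw [markedCount, ← Set.ncard_coe_finset]
  congr 1
  ext k
  simp only [coe_filter, mem_Icc, Set.mem_ofPred_eq]
  exact ⟨fun ⟨h1, hk, hm⟩ => ⟨⟨h1, ((renewalTime_strictMono hx).id_le k).trans hk⟩, hk, hm⟩,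
    fun ⟨⟨h1, _⟩, hk, hm⟩ => ⟨h1, hk, hm⟩⟩

lemma markedCount_le (hx : ∀ k, 1 ≤ (x (k + 1)).1) (n : ℕ) : markedCount x n ≤ n := by
  rw [markedCount_eq_card hx]
  exact (card_filter_le _ _).trans (by simp)

lemma card_filter_le_markedCount (hx : ∀ k, 1 ≤ (x (k + 1)).1) {K n : ℕ}
    (hK : renewalTime x K ≤ n) : #{k ∈ Icc 1 K | (x k).2 = true} ≤ markedCount x n := by
  have hmono := renewalTime_strictMono hx
  rw [markedCount_eq_card hx]
  refine card_le_card fun k hk => ?_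
  simp only [mem_filter, mem_Icc] at hk ⊢
  have hkn : renewalTime x k ≤ n := (hmono.monotone hk.1.2).trans hK
  exact ⟨⟨hk.1.1, (hmono.id_le k).trans hkn⟩, hkn, hk.2⟩

/-- Either the first `K` intervals end by time `n`, and all their marks are counted, or the
`K`-th renewal comes after `n`, an event of small probability by Markov's inequality. -/
lemma pow_markedCount_le (hx : ∀ k, 1 ≤ (x (k + 1)).1) {s r : ℝ} (hs0 : 0 ≤ s) (hs1 : s ≤ 1)
    (hr : 1 ≤ r) (n K : ℕ) :
    s ^ markedCount x n ≤ s ^ #{k ∈ Icc 1 K | (x k).2 = true} + r ^ renewalTime x K / r ^ n := by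
  rcases le_or_gt (renewalTime x K) n with hK | hK
  · exact le_add_of_le_of_nonneg (pow_le_pow_of_le_one hs0 hs1
      (card_filter_le_markedCount hx hK)) (by positivity)
  · have : 1 ≤ r ^ renewalTime x K / r ^ n :=
      (one_le_div (by positivity)).2 (pow_le_pow_right₀ hr hK.le)
    exact le_add_of_nonneg_of_le (by positivity) ((pow_le_one₀ hs0 hs1).trans this)

lemma markedCount_le_of_lt_markedArrival {j v : ℕ} (hv : v < markedArrival x j) :
    markedCount x v ≤ j := by
  have := Nat.notMem_of_lt_sInf hv
  simp only [Set.mem_ofPred_eq] at this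
  omega

end Deterministic

lemma pow_div_le_inv_mul_pow {w : ℝ} (hw0 : 0 < w) (hw1 : w ≤ 1) {m : ℕ} (hm : 0 < m) (n : ℕ) :
    w ^ (n / m) ≤ w⁻¹ * (w ^ (m⁻¹ : ℝ)) ^ n := by
  set θ := w ^ (m⁻¹ : ℝ)
  have hθ0 : 0 < θ := by positivity
  have hθ1 : θ ≤ 1 := Real.rpow_le_one hw0.le hw1 (by positivity)
  have hθm : θ ^ m = w := Real.rpow_inv_natCast_pow hw0.le hm.ne'
  have hmod : w ≤ θ ^ (n % m) := hθm ▸ pow_le_pow_of_le_one hθ0.le hθ1 (Nat.mod_lt n hm).le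
  calc w ^ (n / m) = w⁻¹ * (w * (θ ^ m) ^ (n / m)) := by
        rw [hθm, ← mul_assoc, inv_mul_cancel₀ hw0.ne', one_mul]
    _ ≤ w⁻¹ * (θ ^ (n % m) * (θ ^ m) ^ (n / m)) := by gcongr
    _ = w⁻¹ * θ ^ n := by rw [← pow_mul, ← pow_add, Nat.mod_add_div]

/-- Taking `K` proportional to `n` balances the two terms. -/
lemma exists_le_geometric_of_forall_le {f : ℕ → ℝ} {u A B r : ℝ} (hu0 : 0 < u) (hu1 : u < 1)
    (hA : 0 ≤ A) (hB : 0 ≤ B) (hr : 1 < r) (hf : ∀ n K, f n ≤ u ^ K + A * B ^ K / r ^ n) :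
    ∃ C θ : ℝ, 0 < θ ∧ θ < 1 ∧ ∀ n, f n ≤ C * θ ^ n := by
  obtain ⟨m, hm⟩ := pow_unbounded_of_one_lt B hr
  have hrm : B < r ^ (m + 1) := hm.trans_le (pow_le_pow_right₀ hr.le m.le_succ)
  set w := max u (B / r ^ (m + 1))
  have hw0 : 0 < w := lt_max_of_lt_left hu0
  have hw1 : w < 1 := max_lt hu1 ((div_lt_one (by positivity)).2 hrm)
  refine ⟨(1 + A) * w⁻¹, w ^ ((m + 1 : ℕ)⁻¹ : ℝ), by positivity,
    Real.rpow_lt_one hw0.le hw1 (by positivity), fun n => ?_⟩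
  set K := n / (m + 1)
  have hKn : (m + 1) * K ≤ n := Nat.mul_div_le n (m + 1)
  calc f n ≤ u ^ K + A * B ^ K / r ^ n := hf n K
    _ ≤ w ^ K + A * w ^ K := by
        have hBK : B ^ K / r ^ n ≤ w ^ K :=
          calc B ^ K / r ^ n ≤ B ^ K / r ^ ((m + 1) * K) := by
                gcongr
                exact hr.le
            _ = (B / r ^ (m + 1)) ^ K := by rw [pow_mul, div_pow]
            _ ≤ w ^ K := pow_le_pow_left₀ (by positivity) (le_max_right _ _) K
        rw [mul_div_assoc]
        gcongr
        exact le_max_left _ _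
    _ = (1 + A) * w ^ K := by ring
    _ ≤ (1 + A) * (w⁻¹ * (w ^ ((m + 1 : ℕ)⁻¹ : ℝ)) ^ n) := by
        gcongr
        exact pow_div_le_inv_mul_pow hw0 hw1.le m.succ_pos n
    _ = _ := by ring

lemma limsup_inv_mul_log_lt_zero {f : ℕ → ℝ} {c C θ : ℝ} (hc : 0 < c) (hθ0 : 0 < θ)
    (hθ1 : θ < 1) (hlow : ∀ n, c ^ n ≤ f n) (hup : ∀ n, f n ≤ C * θ ^ n) :
    limsup (fun n : ℕ => (1 / (n : ℝ)) * Real.log (f n)) atTop < 0 := by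
  have hf : ∀ n, 0 < f n := fun n => (pow_pos hc n).trans_le (hlow n)
  have hC : 0 < C := by simpa using (hf 0).trans_le (hup 0)
  have hbelow : ∀ n : ℕ, min 0 (Real.log c) ≤ (1 / (n : ℝ)) * Real.log (f n) := by
    rintro (_ | n)
    · simp
    · refine (min_le_right _ _).trans ?_
      rw [one_div, le_inv_mul_iff₀ (by positivity), ← Real.log_pow]
      exact Real.log_le_log (by positivity) (hlow _)
  have habove : ∀ᶠ n : ℕ in atTop,
      (1 / (n : ℝ)) * Real.log (f n) ≤ Real.log C * (1 / (n : ℝ)) + Real.log θ := by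
    filter_upwards [eventually_ge_atTop 1] with n hn
    have hn' : (0 : ℝ) < n := by exact_mod_cast hn
    calc (1 / (n : ℝ)) * Real.log (f n) ≤ (1 / (n : ℝ)) * Real.log (C * θ ^ n) := by
          gcongr
          exacts [hf n, hup n]
      _ = _ := by
          rw [Real.log_mul hC.ne' (by positivity), Real.log_pow]
          field_simp
  have hlim : Tendsto (fun n : ℕ => Real.log C * (1 / (n : ℝ)) + Real.log θ) atTop
      (𝓝 (Real.log θ)) := by
    simpa using (tendsto_one_div_atTop_nhds_zero_nat.const_mul (Real.log C)).add_const
      (Real.log θ)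
  calc limsup (fun n : ℕ => (1 / (n : ℝ)) * Real.log (f n)) atTop
      ≤ limsup (fun n : ℕ => Real.log C * (1 / (n : ℝ)) + Real.log θ) atTop :=
        limsup_le_limsup habove (isBoundedUnder_of ⟨_, hbelow⟩).isCoboundedUnder_le
          hlim.isBoundedUnder_le
    _ = Real.log θ := hlim.limsup_eq
    _ < 0 := Real.log_neg hθ0 hθ1

lemma pow_eq_exp_log_mul {r : ℝ} (hr : 0 < r) (n : ℕ) : r ^ n = Real.exp (Real.log r * n) := by
  rw [← Real.rpow_natCast, Real.rpow_def_of_pos hr]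

section General

variable {Ω : Type*} [MeasurableSpace Ω] {μ : Measure Ω}

lemma measurable_sInf_setOf_nat {p : ℕ → Ω → Prop} (hp : ∀ n, MeasurableSet {ω | p n ω}) :
    Measurable fun ω => sInf {n | p n ω} := by
  classical
  -- `Nat.find` of `p` padded so that it is `0` when `p · ω` never holds, like `sInf ∅`
  let p' : Ω → ℕ → Prop := fun ω n => p n ω ∨ ∀ m, ¬ p m ω
  have hex : ∀ ω, ∃ n, p' ω n := fun ω => by
    by_cases h : ∃ n, p n ω
    · exact h.imp fun _ => Or.inl
    · exact ⟨0, Or.inr (not_exists.1 h)⟩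
  have hfind : (fun ω => sInf {n | p n ω}) = fun ω => Nat.find (hex ω) := by
    funext ω
    by_cases h : ∃ n, p n ω
    · have hfind := Nat.find_spec (hex ω)
      refine le_antisymm (Nat.sInf_le (hfind.resolve_right fun h' => ?_)) ?_
      · exact h.elim h'
      · exact Nat.find_min' _ (Or.inl (Nat.sInf_mem h))
    · have : {n | p n ω} = ∅ := Set.eq_empty_of_forall_notMem fun n hn => h ⟨n, hn⟩
      rw [this, Nat.sInf_empty, eq_comm, Nat.find_eq_zero]
      exact Or.inr (not_exists.1 h)
  rw [hfind]
  refine measurable_find hex fun k => ?_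
  simp only [p', Set.ofPred_or, Set.ofPred_forall]
  exact (hp k).union (MeasurableSet.iInter fun m => (hp m).compl)

lemma integrable_pow_of_le_one [IsFiniteMeasure μ] {N : Ω → ℕ} (hN : Measurable N) {s : ℝ}
    (hs0 : 0 ≤ s) (hs1 : s ≤ 1) : Integrable (fun ω => s ^ N ω) μ :=
  .of_bound (by fun_prop) 1 <| ae_of_all _ fun ω => by
    rw [Real.norm_of_nonneg (by positivity)]
    exact pow_le_one₀ hs0 hs1

lemma measureReal_le_le_integral_pow_div_s4 [IsFiniteMeasure μ] {N : Ω → ℕ} (hN : Measurable N)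
    {s : ℝ} (hs0 : 0 < s) (hs1 : s ≤ 1) (j : ℕ) :
    μ.real {ω | N ω ≤ j} ≤ (∫ ω, s ^ N ω ∂μ) / s ^ j := by
  rw [le_div_iff₀ (by positivity), mul_comm]
  refine le_trans ?_ (mul_meas_ge_le_integral_of_nonneg (ae_of_all _ fun ω => by positivity)
    (integrable_pow_of_le_one hN hs0.le hs1) (s ^ j))
  exact mul_le_mul_of_nonneg_left
    (measureReal_mono fun ω (hω : N ω ≤ j) => pow_le_pow_of_le_one hs0.le hs1 hω) (by positivity)

lemma integrable_pow_of_measureReal_lt_le [IsFiniteMeasure μ] {N : Ω → ℕ} (hN : Measurable N)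
    {C θ r : ℝ} (hθ : 0 ≤ θ) (hr : 0 ≤ r) (hrθ : r * θ < 1)
    (htail : ∀ v : ℕ, μ.real {ω | v < N ω} ≤ C * θ ^ v) :
    Integrable (fun ω => r ^ N ω) μ := by
  have hC : 0 ≤ C := measureReal_nonneg.trans (by simpa using htail 0)
  refine ⟨by fun_prop, (hasFiniteIntegral_iff_ofReal (ae_of_all _ fun ω => by positivity)).2 ?_⟩
  have hpoint : ∀ v : ℕ, μ (N ⁻¹' {v + 1}) ≤ ENNReal.ofReal (C * θ ^ v) := fun v =>
    calc μ (N ⁻¹' {v + 1}) ≤ μ {ω | v < N ω} :=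
          measure_mono fun ω (hω : N ω = v + 1) => by simp [hω]
      _ = ENNReal.ofReal (μ.real {ω | v < N ω}) := (ofReal_measureReal).symm
      _ ≤ _ := ENNReal.ofReal_le_ofReal (htail v)
  have hsum : Summable fun v : ℕ => r * C * (r * θ) ^ v :=
    (summable_geometric_of_lt_one (by positivity) hrθ).mul_left _
  calc ∫⁻ ω, ENNReal.ofReal (r ^ N ω) ∂μ
      = ∑' v : ℕ, ENNReal.ofReal (r ^ v) * μ (N ⁻¹' {v}) := by
        rw [← lintegral_map (f := fun v : ℕ => ENNReal.ofReal (r ^ v)) (by fun_prop) hN,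
          lintegral_countable']
        simp only [Measure.map_apply hN (measurableSet_singleton _)]
    _ = ENNReal.ofReal (r ^ 0) * μ (N ⁻¹' {0})
          + ∑' v : ℕ, ENNReal.ofReal (r ^ (v + 1)) * μ (N ⁻¹' {v + 1}) :=
        tsum_eq_zero_add' ENNReal.summable
    _ ≤ μ (N ⁻¹' {0}) + ∑' v : ℕ, ENNReal.ofReal (r * C * (r * θ) ^ v) := by
        rw [pow_zero, ENNReal.ofReal_one, one_mul]
        gcongr with v
        calc ENNReal.ofReal (r ^ (v + 1)) * μ (N ⁻¹' {v + 1})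
            ≤ ENNReal.ofReal (r ^ (v + 1)) * ENNReal.ofReal (C * θ ^ v) := by
              gcongr
              exact hpoint v
          _ = ENNReal.ofReal (r * C * (r * θ) ^ v) := by
              rw [← ENNReal.ofReal_mul (by positivity)]
              ring_nf
    _ = μ (N ⁻¹' {0}) + ENNReal.ofReal (∑' v : ℕ, r * C * (r * θ) ^ v) := by
        rw [ENNReal.ofReal_tsum_of_nonneg (fun v => by positivity) hsum]
    _ < ⊤ := ENNReal.add_lt_top.2 ⟨measure_lt_top _ _, ENNReal.ofReal_lt_top⟩

lemma integral_ite_const [IsProbabilityMeasure μ] {P : Ω → Prop} [DecidablePred P]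
    (hP : MeasurableSet {ω | P ω}) (a b : ℝ) :
    ∫ ω, (if P ω then a else b) ∂μ = μ.real {ω | P ω} * a + (1 - μ.real {ω | P ω}) * b := by
  rw [← probReal_compl_eq_one_sub hP, ← smul_eq_mul, ← smul_eq_mul, ← setIntegral_const,
    ← setIntegral_const, ← integral_piecewise hP integrableOn_const integrableOn_const]
  rfl

end General

structure IsMarkedRenewal {Ω : Type*} [MeasurableSpace Ω] (X : ℕ → Ω → ℕ × Bool)
    (μ : Measure Ω) : Prop where
  indep : iIndepFun X μ
  measurable : ∀ k, Measurable (X k)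
  identDistrib : ∀ k, IdentDistrib (X (k + 1)) (X 1) μ μ
  one_le_fst : ∀ k ω, 1 ≤ (X (k + 1) ω).1

namespace IsMarkedRenewal

variable {Ω : Type*} [MeasurableSpace Ω] {μ : Measure Ω} {X : ℕ → Ω → ℕ × Bool}

lemma isProbabilityMeasure (hX : IsMarkedRenewal X μ) : IsProbabilityMeasure μ :=
  hX.indep.isProbabilityMeasure

lemma measurable_renewalTime (hX : IsMarkedRenewal X μ) (k : ℕ) :
    Measurable fun ω => renewalTime (X · ω) k :=
  Finset.measurable_sum _ fun i _ => measurable_fst.comp (hX.measurable i)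

lemma measurable_markedCount (hX : IsMarkedRenewal X μ) (n : ℕ) :
    Measurable fun ω => markedCount (X · ω) n := by
  have : (fun ω => markedCount (X · ω) n) = fun ω => ∑ k ∈ Icc 1 n,
      if renewalTime (X · ω) k ≤ n ∧ (X k ω).2 = true then 1 else 0 :=
    funext fun ω => by rw [markedCount_eq_card (hX.one_le_fst · ω), card_filter]
  rw [this]
  refine Finset.measurable_sum _ fun k _ => Measurable.ite ?_ measurable_const measurable_const
  exact (hX.measurable_renewalTime k measurableSet_Iic).inter
    (measurable_snd.comp (hX.measurable k) (measurableSet_singleton true))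

lemma measurable_markedArrival (hX : IsMarkedRenewal X μ) (j : ℕ) :
    Measurable fun ω => markedArrival (X · ω) j :=
  measurable_sInf_setOf_nat fun n => hX.measurable_markedCount n measurableSet_Ici

lemma integrable_pow_renewalTime (hX : IsMarkedRenewal X μ) {r : ℝ} (hr : 0 < r)
    (h0 : Integrable (fun ω => r ^ (X 0 ω).1) μ) (h1 : Integrable (fun ω => r ^ (X 1 ω).1) μ)
    (K : ℕ) :
    Integrable (fun ω => r ^ renewalTime (X · ω) K) μ ∧
      ∫ ω, r ^ renewalTime (X · ω) K ∂μ =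
        (∫ ω, r ^ (X 0 ω).1 ∂μ) * (∫ ω, r ^ (X 1 ω).1 ∂μ) ^ K := by
  have := hX.isProbabilityMeasure
  set Z : ℕ → Ω → ℝ := fun i ω => ((X i ω).1 : ℝ)
  have hZ : iIndepFun Z μ := hX.indep.comp (fun _ p => (p.1 : ℝ)) fun _ => by fun_prop
  have hZm : ∀ i, Measurable (Z i) := fun i =>
    (measurable_of_countable fun p : ℕ × Bool => (p.1 : ℝ)).comp (hX.measurable i)
  have hpow : ∀ i ω, r ^ (X i ω).1 = Real.exp (Real.log r * Z i ω) :=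
    fun i ω => pow_eq_exp_log_mul hr _
  have hsum : ∀ ω, r ^ renewalTime (X · ω) K =
      Real.exp (Real.log r * (∑ i ∈ range (K + 1), Z i) ω) := fun ω => by
    rw [pow_eq_exp_log_mul hr, renewalTime, Finset.sum_apply]
    push_cast
    rfl
  have hident : ∀ k, IdentDistrib (fun ω => r ^ (X (k + 1) ω).1) (fun ω => r ^ (X 1 ω).1) μ μ :=
    fun k => (hX.identDistrib k).comp (u := fun p : ℕ × Bool => r ^ p.1) (by fun_prop)
  have hint : ∀ i, Integrable (fun ω => r ^ (X i ω).1) μ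
    | 0 => h0
    | k + 1 => (hident k).integrable_iff.2 h1
  simp_rw [hsum]
  refine ⟨hZ.integrable_exp_mul_sum hZm fun i _ => ?_, ?_⟩
  · simpa only [hpow] using hint i
  · change mgf (∑ i ∈ range (K + 1), Z i) μ (Real.log r) = _
    rw [hZ.mgf_sum hZm, prod_range_succ']
    simp only [mgf, ← hpow, fun k => (hident k).integral_eq, prod_const, card_range]
    ring

lemma measurable_card_marks (hX : IsMarkedRenewal X μ) (K : ℕ) :
    Measurable fun ω => #{k ∈ Icc 1 K | (X k ω).2 = true} := by
  simp_rw [card_filter]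
  exact Finset.measurable_sum _ fun k _ => Measurable.ite
    (measurable_snd.comp (hX.measurable k) (measurableSet_singleton true))
    measurable_const measurable_const

lemma integral_pow_card_marks (hX : IsMarkedRenewal X μ) {s : ℝ} (hs : 0 < s) (K : ℕ) :
    ∫ ω, s ^ #{k ∈ Icc 1 K | (X k ω).2 = true} ∂μ =
      (1 - μ.real {ω | (X 1 ω).2 = true} + μ.real {ω | (X 1 ω).2 = true} * s) ^ K := by
  have := hX.isProbabilityMeasure
  set b : ℕ × Bool → ℝ := fun p => if p.2 = true then 1 else 0
  set W : ℕ → Ω → ℝ := fun k => b ∘ X k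
  have hW : iIndepFun W μ := hX.indep.comp (fun _ => b) fun _ => measurable_of_countable b
  have hWm : ∀ k, Measurable (W k) := fun k => (measurable_of_countable b).comp (hX.measurable k)
  have hmark : ∀ k, mgf (W (k + 1)) μ (Real.log s) =
      1 - μ.real {ω | (X 1 ω).2 = true} + μ.real {ω | (X 1 ω).2 = true} * s := fun k => by
    rw [mgf_congr_of_identDistrib _ _ ((hX.identDistrib k).comp (measurable_of_countable b)), mgf]
    have : ∀ ω, Real.exp (Real.log s * W 1 ω) = if (X 1 ω).2 = true then s else 1 := fun ω => by
      split_ifs with h <;> simp [W, b, h, Real.exp_log hs]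
    rw [integral_congr_ae (ae_of_all _ this), integral_ite_const (P := fun ω => (X 1 ω).2 = true)
      (measurable_snd.comp (hX.measurable 1) (measurableSet_singleton true))]
    ring
  have hpow : ∀ ω, s ^ #{k ∈ Icc 1 K | (X k ω).2 = true} =
      Real.exp (Real.log s * (∑ k ∈ Icc 1 K, W k) ω) := fun ω => by
    rw [pow_eq_exp_log_mul hs, Finset.sum_apply]
    exact congrArg _ (congrArg _ (Finset.sum_boole _ _).symm)
  simp_rw [hpow]
  change mgf (∑ k ∈ Icc 1 K, W k) μ (Real.log s) = _
  rw [hW.mgf_sum hWm, prod_congr rfl fun k hk => ?_, prod_const, Nat.card_Icc, Nat.add_sub_cancel]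
  obtain ⟨j, rfl⟩ : ∃ j, k = j + 1 := ⟨k - 1, by simp at hk; omega⟩
  exact hmark j

lemma integral_pow_markedCount_le (hX : IsMarkedRenewal X μ) {s r : ℝ} (hs0 : 0 < s)
    (hs1 : s ≤ 1) (hr : 1 ≤ r) (h0 : Integrable (fun ω => r ^ (X 0 ω).1) μ)
    (h1 : Integrable (fun ω => r ^ (X 1 ω).1) μ) (n K : ℕ) :
    ∫ ω, s ^ markedCount (X · ω) n ∂μ ≤
      (1 - μ.real {ω | (X 1 ω).2 = true} + μ.real {ω | (X 1 ω).2 = true} * s) ^ K +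
        (∫ ω, r ^ (X 0 ω).1 ∂μ) * (∫ ω, r ^ (X 1 ω).1 ∂μ) ^ K / r ^ n := by
  have := hX.isProbabilityMeasure
  obtain ⟨hτ, hτ_eq⟩ := hX.integrable_pow_renewalTime (by linarith) h0 h1 K
  have hmarks := integrable_pow_of_le_one (μ := μ) (hX.measurable_card_marks K) hs0.le hs1
  calc ∫ ω, s ^ markedCount (X · ω) n ∂μ
      ≤ ∫ ω, (s ^ #{k ∈ Icc 1 K | (X k ω).2 = true} + r ^ renewalTime (X · ω) K / r ^ n) ∂μ :=
        integral_mono (integrable_pow_of_le_one (hX.measurable_markedCount n) hs0.le hs1)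
          (hmarks.add (hτ.div_const _))
          fun ω => pow_markedCount_le (hX.one_le_fst · ω) hs0.le hs1 hr n K
    _ = _ := by
        rw [integral_add hmarks (hτ.div_const _), integral_div, hX.integral_pow_card_marks hs0,
          hτ_eq]

lemma exists_integral_pow_markedCount_le_geometric (hX : IsMarkedRenewal X μ)
    (hmark : 0 < μ {ω | (X 1 ω).2 = true}) {r : ℝ} (hr : 1 < r)
    (h0 : Integrable (fun ω => r ^ (X 0 ω).1) μ) (h1 : Integrable (fun ω => r ^ (X 1 ω).1) μ)
    {s : ℝ} (hs0 : 0 < s) (hs1 : s < 1) :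
    ∃ C θ : ℝ, 0 < θ ∧ θ < 1 ∧ ∀ n, ∫ ω, s ^ markedCount (X · ω) n ∂μ ≤ C * θ ^ n := by
  have := hX.isProbabilityMeasure
  have hp0 : 0 < μ.real {ω | (X 1 ω).2 = true} := ENNReal.toReal_pos hmark.ne' (measure_ne_top _ _)
  have hp1 : μ.real {ω | (X 1 ω).2 = true} ≤ 1 := measureReal_le_one
  exact exists_le_geometric_of_forall_le (by nlinarith) (by nlinarith)
    (integral_nonneg fun ω => by positivity) (integral_nonneg fun ω => by positivity) hr
    (hX.integral_pow_markedCount_le hs0 hs1.le hr.le h0 h1)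

theorem limsup_log_integral_pow_markedCount_lt_zero (hX : IsMarkedRenewal X μ)
    (hmark : 0 < μ {ω | (X 1 ω).2 = true}) {r : ℝ} (hr : 1 < r)
    (h0 : Integrable (fun ω => r ^ (X 0 ω).1) μ) (h1 : Integrable (fun ω => r ^ (X 1 ω).1) μ)
    {s : ℝ} (hs0 : 0 < s) (hs1 : s < 1) :
    limsup (fun n : ℕ => (1 / (n : ℝ)) * Real.log (∫ ω, s ^ markedCount (X · ω) n ∂μ))
      atTop < 0 := by
  have := hX.isProbabilityMeasure
  obtain ⟨C, θ, hθ0, hθ1, hC⟩ :=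
    hX.exists_integral_pow_markedCount_le_geometric hmark hr h0 h1 hs0 hs1
  refine limsup_inv_mul_log_lt_zero hs0 hθ0 hθ1 (fun n => ?_) hC
  calc s ^ n = ∫ _, s ^ n ∂μ := by simp
    _ ≤ ∫ ω, s ^ markedCount (X · ω) n ∂μ :=
        integral_mono (integrable_const _)
          (integrable_pow_of_le_one (hX.measurable_markedCount n) hs0.le hs1.le)
          fun ω => pow_le_pow_of_le_one hs0.le hs1.le (markedCount_le (hX.one_le_fst · ω) n)

/-- `{v < ρ j} ⊆ {M v ≤ j}`, whose probability is at most `2 ^ j E[(1 / 2) ^ M v]` by Markov's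
inequality. -/
theorem exists_integrable_pow_markedArrival (hX : IsMarkedRenewal X μ)
    (hmark : 0 < μ {ω | (X 1 ω).2 = true}) {r : ℝ} (hr : 1 < r)
    (h0 : Integrable (fun ω => r ^ (X 0 ω).1) μ) (h1 : Integrable (fun ω => r ^ (X 1 ω).1) μ) :
    ∃ r' : ℝ, 1 < r' ∧ ∀ j, Integrable (fun ω => r' ^ markedArrival (X · ω) j) μ := by
  have := hX.isProbabilityMeasure
  obtain ⟨C, θ, hθ0, hθ1, hC⟩ := hX.exists_integral_pow_markedCount_le_geometric hmark hr h0 h1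
    (s := 1 / 2) (by norm_num) (by norm_num)
  obtain ⟨r', hr'1, hr'θ⟩ := exists_between ((one_lt_inv₀ hθ0).2 hθ1)
  have hr'θ1 : r' * θ < 1 := by
    simpa [hθ0.ne'] using mul_lt_mul_of_pos_right hr'θ hθ0
  refine ⟨r', hr'1, fun j => integrable_pow_of_measureReal_lt_le (C := 2 ^ j * C)
    (hX.measurable_markedArrival j) hθ0.le (by positivity) hr'θ1 fun v => ?_⟩
  calc μ.real {ω | v < markedArrival (X · ω) j}
      ≤ μ.real {ω | markedCount (X · ω) v ≤ j} :=
        measureReal_mono fun ω => markedCount_le_of_lt_markedArrival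
    _ ≤ (∫ ω, (1 / 2 : ℝ) ^ markedCount (X · ω) v ∂μ) / (1 / 2) ^ j :=
        measureReal_le_le_integral_pow_div_s4 (hX.measurable_markedCount v) (by norm_num)
          (by norm_num) j
    _ ≤ C * θ ^ v / (1 / 2) ^ j := by gcongr; exact hC v
    _ = 2 ^ j * C * θ ^ v := by rw [one_div_pow, div_div_eq_mul_div, div_one]; ring

end IsMarkedRenewal

theorem stmt4_general
    {Ω : Type*} [MeasurableSpace Ω] (μ : Measure Ω)
    (g : ℕ → Ω → ℕ) (I : ℕ → Ω → Bool)
    (hmeas : ∀ k, Measurable (g k)) (hmeasI : ∀ k, Measurable (I k))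
    (hindep : iIndepFun
      (fun k ω => if k = 0 then (g 0 ω, false) else (g k ω, I k ω)) μ)
    (hident : ∀ k, IdentDistrib (fun ω => (g (k + 1) ω, I (k + 1) ω))
      (fun ω => (g 1 ω, I 1 ω)) μ μ)
    (hpos : ∀ k ω, 1 ≤ g (k + 1) ω)
    (q : ℝ) (hq : 0 < q) (hqI : μ {ω | I 1 ω = true} = ENNReal.ofReal q)
    (τ : ℕ → Ω → ℕ) (hτ : ∀ k ω, τ k ω = ∑ i ∈ Finset.range (k + 1), g i ω)
    (M : ℕ → Ω → ℕ)
    (hM : ∀ n ω, M n ω = {k | 1 ≤ k ∧ τ k ω ≤ n ∧ I k ω = true}.ncard)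
    (ρ : ℕ → Ω → ℕ) (hρ : ∀ j ω, ρ j ω = sInf {n : ℕ | j + 1 ≤ M n ω})
    (htail : ∃ r : ℝ, 1 < r ∧ Integrable (fun ω => r ^ g 0 ω) μ ∧
      Integrable (fun ω => r ^ g 1 ω) μ) :
    (∃ r : ℝ, 1 < r ∧ Integrable (fun ω => r ^ ρ 0 ω) μ ∧
      Integrable (fun ω => r ^ (ρ 1 ω - ρ 0 ω)) μ) ∧
    ∀ s : ℝ, 0 < s → s < 1 →
      Filter.limsup (fun n : ℕ => (1 / (n : ℝ)) * Real.log (∫ ω, s ^ M n ω ∂μ))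
        atTop < 0 := by
  obtain ⟨r, hr, h0, h1⟩ := htail
  set X : ℕ → Ω → ℕ × Bool := fun k ω => if k = 0 then (g 0 ω, false) else (g k ω, I k ω)
  have hfst : ∀ k ω, (X k ω).1 = g k ω := by rintro (_ | k) ω <;> rfl
  have hX : IsMarkedRenewal X μ :=
    { indep := hindep
      measurable := by
        rintro (_ | k)
        exacts [(hmeas 0).prodMk measurable_const, (hmeas _).prodMk (hmeasI _)]
      identDistrib := hident
      one_le_fst := hpos }
  have hmark : 0 < μ {ω | (X 1 ω).2 = true} := by
    simpa [X, hqI] using hq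
  obtain rfl : τ = fun k ω => renewalTime (X · ω) k :=
    funext₂ fun k ω => by simp only [hτ, renewalTime, hfst]
  obtain rfl : M = fun n ω => markedCount (X · ω) n := by
    refine funext₂ fun n ω => (hM n ω).trans (congrArg _ (Set.ext fun k => ?_))
    rcases k with _ | k
    · simp
    · rfl
  obtain rfl : ρ = fun j ω => markedArrival (X · ω) j := funext₂ hρ
  simp only [← hfst] at h0 h1
  obtain ⟨r', hr', hint⟩ := hX.exists_integrable_pow_markedArrival hmark hr h0 h1
  refine ⟨⟨r', hr', hint 0, (hint 1).mono' ?_ (ae_of_all _ fun ω => ?_)⟩,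
    fun s hs0 hs1 => hX.limsup_log_integral_pow_markedCount_lt_zero hmark hr h0 h1 hs0 hs1⟩
  · exact (measurable_const.pow ((hX.measurable_markedArrival 1).sub
      (hX.measurable_markedArrival 0))).aestronglyMeasurable
  · rw [Real.norm_of_nonneg (by positivity)]
    exact pow_le_pow_right₀ hr'.le (Nat.sub_le _ _)

/-- Marked renewal process.  The delay `g 0` and the i.i.d. marked inter-arrival pairs
`(g k, I k)`, `k ≥ 1`, are mutually independent, increments are positive with
exponential tails, and each interval is marked with probability `q > 0` (the mark `I k`
depending only on the `k`-th interval).  Then the counting process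
`M n = #{k ≥ 1 : τ k ≤ n, I k = true}` of marked renewals is a delayed renewal process
whose delay `ρ 0` and first inter-arrival time `ρ 1 − ρ 0` have exponential tails, and
consequently `limsup (1/n) log E[s^{M(n)}] < 0` for every `s ∈ (0,1)`. -/
theorem stmt4
    {Ω : Type*} [MeasurableSpace Ω] (μ : Measure Ω) [IsProbabilityMeasure μ]
    (g : ℕ → Ω → ℕ) (I : ℕ → Ω → Bool)
    (hmeas : ∀ k, Measurable (g k)) (hmeasI : ∀ k, Measurable (I k))
    (hindep : iIndepFun
      (fun k ω => if k = 0 then (g 0 ω, false) else (g k ω, I k ω)) μ)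
    (hident : ∀ k, IdentDistrib (fun ω => (g (k + 1) ω, I (k + 1) ω))
      (fun ω => (g 1 ω, I 1 ω)) μ μ)
    (hpos : ∀ k ω, 1 ≤ g (k + 1) ω)
    (q : ℝ) (hq : 0 < q) (hqI : μ {ω | I 1 ω = true} = ENNReal.ofReal q)
    (τ : ℕ → Ω → ℕ) (hτ : ∀ k ω, τ k ω = ∑ i ∈ Finset.range (k + 1), g i ω)
    (M : ℕ → Ω → ℕ)
    (hM : ∀ n ω, M n ω = {k | 1 ≤ k ∧ τ k ω ≤ n ∧ I k ω = true}.ncard)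
    (ρ : ℕ → Ω → ℕ) (hρ : ∀ j ω, ρ j ω = sInf {n : ℕ | j + 1 ≤ M n ω})
    (htail : ∃ r : ℝ, 1 < r ∧ Integrable (fun ω => r ^ g 0 ω) μ ∧
      Integrable (fun ω => r ^ g 1 ω) μ) :
    (∃ r : ℝ, 1 < r ∧ Integrable (fun ω => r ^ ρ 0 ω) μ ∧
      Integrable (fun ω => r ^ (ρ 1 ω - ρ 0 ω)) μ) ∧
    ∀ s : ℝ, 0 < s → s < 1 →
      Filter.limsup (fun n : ℕ => (1 / (n : ℝ)) * Real.log (∫ ω, s ^ M n ω ∂μ))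
        atTop < 0 :=
  stmt4_general μ g I hmeas hmeasI hindep hident hpos q hq hqI τ hτ M hM ρ hρ htail
end

section
/- Let ζ be a positive random variable whose distribution function F_ζ satisfies F_ζ(x) ≤ C_γ x^γ for all x ≥ 0, for some γ ≥ 0 and constant C_γ < ∞, and whose density f_ζ satisfies f_ζ(x) ≤ ∫_{𝒮₁} F_ζ(s₁^α x) ν(ds) for all x > 0, where α < 0 and ν is a probability measure on 𝒮₁ with ∫_{𝒮₁} s₁^{αγ} ν(ds) < ∞. Then F_ζ(x) ≤ C' x^{γ+1} for all x ≥ 0 for some constant C' < ∞. -/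
/-!
The density bound and the hypothesis `F(y) ≤ Cγ y^γ` give `f(t) ≤ Cγ M t^γ` with
`M = ∫ s₁^{αγ} ν(ds)`, since `(s₁^α t)^γ = s₁^{αγ} t^γ`; integrating over `(0, x]` yields
`F(x) ≤ Cγ M x^{γ+1} / (γ + 1)`.
-/

open MeasureTheory Filter Topology

/-- The space `𝒮₁` of nonincreasing sequences of nonnegative reals summing to `1`,
with the measurable structure inherited from `ℕ → ℝ`. -/
def S1 : Set (ℕ → ℝ) := {s | Antitone s ∧ (∀ i, 0 ≤ s i) ∧ HasSum s 1}

lemma S1.apply_zero_pos {s : ℕ → ℝ} (hs : s ∈ S1) : 0 < s 0 := by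
  obtain ⟨hanti, hnonneg, hsum⟩ := hs
  by_contra! h
  have hzero : s = 0 := funext fun i =>
    le_antisymm ((hanti (Nat.zero_le i)).trans h) (hnonneg i)
  exact one_ne_zero (hsum.unique (hzero ▸ hasSum_zero))

lemma integral_comp_mul_le_of_le_rpow {X : Type*} [MeasurableSpace X] {μ : Measure X}
    {F : ℝ → ℝ} {g : X → ℝ} {C γ t : ℝ} (hF_nonneg : ∀ y, 0 ≤ F y)
    (hF_le : ∀ y, 0 ≤ y → F y ≤ C * y ^ γ) (hg : ∀ x, 0 ≤ g x)
    (hg_int : Integrable (fun x => g x ^ γ) μ) (ht : 0 ≤ t) :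
    ∫ x, F (g x * t) ∂μ ≤ C * (∫ x, g x ^ γ ∂μ) * t ^ γ := by
  have hpointwise : ∀ x, F (g x * t) ≤ C * (g x ^ γ * t ^ γ) := fun x => by
    rw [← Real.mul_rpow (hg x) ht]
    exact hF_le _ (mul_nonneg (hg x) ht)
  calc ∫ x, F (g x * t) ∂μ ≤ ∫ x, C * (g x ^ γ * t ^ γ) ∂μ :=
        integral_mono_of_nonneg (.of_forall fun _ => hF_nonneg _)
          ((hg_int.mul_const _).const_mul C) (.of_forall hpointwise)
    _ = C * (∫ x, g x ^ γ ∂μ) * t ^ γ := by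
        rw [integral_const_mul, integral_mul_const, mul_assoc]

lemma setIntegral_Ioc_le_of_le_rpow {f : ℝ → ℝ} {K γ x : ℝ} (hγ : -1 < γ) (hx : 0 ≤ x)
    (hf_int : IntegrableOn f (Set.Ioc 0 x)) (hf_le : ∀ t, 0 < t → f t ≤ K * t ^ γ) :
    ∫ t in Set.Ioc 0 x, f t ≤ K / (γ + 1) * x ^ (γ + 1) := by
  have hrpow_int : IntegrableOn (fun t => K * t ^ γ) (Set.Ioc 0 x) :=
    ((intervalIntegrable_iff_integrableOn_Ioc_of_le hx).mp
      (intervalIntegral.intervalIntegrable_rpow' hγ)).const_mul K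
  calc ∫ t in Set.Ioc 0 x, f t ≤ ∫ t in Set.Ioc 0 x, K * t ^ γ :=
        setIntegral_mono_on hf_int hrpow_int measurableSet_Ioc fun t ht => hf_le t ht.1
    _ = K / (γ + 1) * x ^ (γ + 1) := by
        rw [← intervalIntegral.integral_of_le hx, intervalIntegral.integral_const_mul,
          integral_rpow (.inl hγ), Real.zero_rpow (by linarith), sub_zero, mul_div_assoc',
          div_mul_eq_mul_div]

theorem stmt7_general
    (ν : Measure S1) [IsProbabilityMeasure ν]
    (α γ Cγ : ℝ) (hγ : 0 ≤ γ)
    (F f : ℝ → ℝ)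
    (hf_nonneg : ∀ x, 0 ≤ f x)
    (hf_int : ∀ x : ℝ, IntegrableOn f (Set.Ioc 0 x))
    (hF : ∀ x : ℝ, F x = ∫ t in Set.Ioc (0:ℝ) x, f t)
    (hFbound : ∀ x : ℝ, 0 ≤ x → F x ≤ Cγ * x ^ γ)
    (hfF : ∀ x : ℝ, 0 < x → f x ≤ ∫ s : S1, F ((s.1 0) ^ α * x) ∂ν)
    (hmom : Integrable (fun s : S1 => (s.1 0) ^ (α * γ)) ν) :
    ∃ C' : ℝ, ∀ x : ℝ, 0 ≤ x → F x ≤ C' * x ^ (γ + 1) := by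
  have hF_nonneg (y : ℝ) : 0 ≤ F y :=
    hF y ▸ setIntegral_nonneg measurableSet_Ioc fun t _ => hf_nonneg t
  have hpow_mul (s : S1) : (s.1 0 ^ α) ^ γ = s.1 0 ^ (α * γ) :=
    (Real.rpow_mul (S1.apply_zero_pos s.2).le α γ).symm
  set M := ∫ s : S1, s.1 0 ^ (α * γ) ∂ν
  have hf_le (t : ℝ) (ht : 0 < t) : f t ≤ Cγ * M * t ^ γ := by
    refine (hfF t ht).trans ?_
    have := integral_comp_mul_le_of_le_rpow (μ := ν) (g := fun s : S1 => s.1 0 ^ α) hF_nonneg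
      hFbound (fun s => Real.rpow_nonneg (S1.apply_zero_pos s.2).le α)
      (by simpa only [hpow_mul] using hmom) ht.le
    simpa only [hpow_mul] using this
  exact ⟨Cγ * M / (γ + 1), fun x hx =>
    hF x ▸ setIntegral_Ioc_le_of_le_rpow (by linarith) hx (hf_int x) hf_le⟩

/-- Bootstrapping step: if `F(x) ≤ Cγ x^γ`, `F(x) = ∫₀ˣ f`, and the density satisfies
`f(x) ≤ ∫ F(s₁^α x) ν(ds)` with `∫ s₁^{αγ} ν(ds) < ∞` (`α < 0`), then
`F(x) ≤ C' x^{γ+1}` for some constant `C'`. -/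
theorem stmt7
    (ν : Measure S1) [IsProbabilityMeasure ν]
    (α γ Cγ : ℝ) (hα : α < 0) (hγ : 0 ≤ γ)
    (F f : ℝ → ℝ)
    (hf_nonneg : ∀ x, 0 ≤ f x) (hf_meas : Measurable f)
    (hf_int : ∀ x : ℝ, IntegrableOn f (Set.Ioc 0 x))
    (hF : ∀ x : ℝ, F x = ∫ t in Set.Ioc (0:ℝ) x, f t)
    (hFbound : ∀ x : ℝ, 0 ≤ x → F x ≤ Cγ * x ^ γ)
    (hfF : ∀ x : ℝ, 0 < x → f x ≤ ∫ s : S1, F ((s.1 0) ^ α * x) ∂ν)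
    (hmom : Integrable (fun s : S1 => (s.1 0) ^ (α * γ)) ν) :
    ∃ C' : ℝ, ∀ x : ℝ, 0 ≤ x → F x ≤ C' * x ^ (γ + 1) :=
  stmt7_general ν α γ Cγ hγ F f hf_nonneg hf_int hF hFbound hfF hmom
end

section
/- Fix α < 0, r ∈ (0,1), and a sequence (ε_n) of positive reals with ε_n → 0. Suppose X is a random variable such that for every a > 0, along the subsequence ε_n = a r^{−αn}, the random variables ε_n^{1/α} X_n (where X_n takes values in r^ℤ almost surely) converge in distribution to some limit L. Then L is supported on a^{1/α} r^ℤ ∪ {0} for every a > 0, and since the sets a^{1/α} r^ℤ for different a ∈ (0,∞) intersect only in ∅ or require L = 0, any common distributional limit of ε^{1/α} X over all ε → 0 must be the constant 0. -/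
open MeasureTheory Filter Topology Set
open scoped BoundedContinuousFunction

/-!
A closed set that carries the law of every variable of a sequence also carries the law of its
limit in distribution. The set `{0} ∪ a ^ (1 / α) r ^ ℤ` is closed, so `L` lives on it for every
`a > 0`. For `a = 1` and `a = r ^ (α / 2)` these are `{0} ∪ r ^ ℤ` and `{0} ∪ r ^ (1 / 2) r ^ ℤ`,
which meet only in `0`.
-/

/-- Test against the bounded continuous function `min (infDist · S) 1`, which vanishes exactly on
the closed set `S`. -/
theorem ae_mem_of_tendsto_integral_comp {Ω E ι : Type*} [MeasurableSpace Ω] {μ : Measure Ω}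
    [IsFiniteMeasure μ] [PseudoMetricSpace E] [MeasurableSpace E] [OpensMeasurableSpace E]
    {l : Filter ι} [l.NeBot] {Y : ι → Ω → E} {L : Ω → E} (hL : AEMeasurable L μ) {S : Set E}
    (hS : IsClosed S) (hY : ∀ᶠ i in l, ∀ᵐ ω ∂μ, Y i ω ∈ S)
    (hconv : ∀ f : E →ᵇ ℝ,
      Tendsto (fun i => ∫ ω, f (Y i ω) ∂μ) l (𝓝 (∫ ω, f (L ω) ∂μ))) :
    ∀ᵐ ω ∂μ, L ω ∈ S := by
  rcases S.eq_empty_or_nonempty with rfl | hSne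
  · obtain ⟨i, hi⟩ := hY.exists
    filter_upwards [hi] with ω hω
    exact absurd hω (notMem_empty _)
  have hcont : Continuous fun x => min (Metric.infDist x S) 1 :=
    (Metric.continuous_infDist_pt S).min continuous_const
  have hbound : ∀ x, ‖min (Metric.infDist x S) 1‖ ≤ 1 := fun x => by
    rw [Real.norm_of_nonneg (le_min Metric.infDist_nonneg zero_le_one)]
    exact min_le_right _ _
  set f : E →ᵇ ℝ := .ofNormedAddCommGroup _ hcont 1 hbound
  have hf_nonneg : ∀ x, 0 ≤ f x := fun x => le_min Metric.infDist_nonneg zero_le_one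
  have hf_zero : ∀ x ∈ S, f x = 0 := fun x hx => by
    simp [f, Metric.infDist_zero_of_mem hx]
  have hintegral : ∫ ω, f (L ω) ∂μ = 0 := by
    refine tendsto_nhds_unique (hconv f) (tendsto_const_nhds.congr' ?_)
    filter_upwards [hY] with i hi
    exact (integral_eq_zero_of_ae (hi.mono fun ω hω => hf_zero _ hω)).symm
  have hintegrable : Integrable (fun ω => f (L ω)) μ :=
    .of_bound (f.continuous.measurable.comp_aemeasurable hL).aestronglyMeasurable 1
      (ae_of_all _ fun ω => hbound (L ω))
  filter_upwards [(integral_eq_zero_iff_of_nonneg (fun ω => hf_nonneg _) hintegrable).1 hintegral]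
    with ω hω
  have hdist : min (Metric.infDist (L ω) S) 1 = 0 := hω
  rw [hS.mem_iff_infDist_zero hSne]
  rcases min_eq_iff.1 hdist with ⟨h, _⟩ | ⟨h, _⟩
  · exact h
  · exact absurd h one_ne_zero

theorem isClosed_setOf_eq_zero_or_eq_mul_zpow {c r : ℝ} (hc : 0 < c) (hr0 : 0 < r)
    (hr1 : r < 1) : IsClosed {x : ℝ | x = 0 ∨ ∃ k : ℤ, x = c * r ^ k} := by
  have hcompl : {x : ℝ | x = 0 ∨ ∃ k : ℤ, x = c * r ^ k}ᶜ =
      Iio 0 ∪ ⋃ k : ℤ, Ioo (c * r ^ (k + 1)) (c * r ^ k) := by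
    ext x
    simp only [mem_compl_iff, mem_ofPred_eq, not_or, not_exists, mem_union, mem_Iio, mem_iUnion,
      mem_Ioo]
    constructor
    · rintro ⟨hx0, hxk⟩
      refine (Ne.lt_or_gt hx0).imp id fun hpos => ?_
      obtain ⟨n, hlo, hhi⟩ := exists_mem_Ioc_zpow (div_pos hpos hc) (one_lt_inv₀ hr0 |>.2 hr1)
      rw [inv_zpow', lt_div_iff₀ hc, mul_comm] at hlo
      rw [inv_zpow', div_le_iff₀ hc, mul_comm] at hhi
      refine ⟨-(n + 1), by simpa using hlo, hhi.lt_of_ne (hxk _)⟩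
    · rintro (hneg | ⟨k, hlo, hhi⟩)
      · refine ⟨hneg.ne, fun k hk => ?_⟩
        have : 0 < c * r ^ k := by positivity
        linarith
      · refine ⟨(lt_trans (by positivity) hlo).ne', fun m hm => ?_⟩
        rw [hm, mul_lt_mul_iff_right₀ hc] at hlo hhi
        have hkm := (zpow_lt_zpow_iff_right_of_lt_one₀ hr0 hr1).1 hlo
        have hmk := (zpow_lt_zpow_iff_right_of_lt_one₀ hr0 hr1).1 hhi
        omega
  rw [← isOpen_compl_iff, hcompl]
  exact isOpen_Iio.union (isOpen_iUnion fun _ => isOpen_Ioo)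

theorem zpow_ne_rpow_half_mul_zpow {r : ℝ} (hr0 : 0 < r) (hr1 : r ≠ 1) (k m : ℤ) :
    r ^ k ≠ r ^ (1 / 2 : ℝ) * r ^ m := by
  intro h
  rw [← Real.rpow_intCast, ← Real.rpow_intCast, ← Real.rpow_add hr0,
    Real.rpow_right_inj hr0 hr1] at h
  have h2 : ((2 * k : ℤ) : ℝ) = ((1 + 2 * m : ℤ) : ℝ) := by push_cast; linarith
  have := Int.cast_injective h2
  omega

theorem stmt13_general
    {Ω : Type*} [MeasurableSpace Ω] (μ : Measure Ω) [IsProbabilityMeasure μ]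
    (α r : ℝ) (hα : α < 0) (hr0 : 0 < r) (hr1 : r < 1)
    (X : ℕ → Ω → ℝ)
    (L : Ω → ℝ) (hmeasL : Measurable L)
    (hlat : ∀ n, ∀ᵐ ω ∂μ, ∃ k : ℤ, X n ω = r ^ k)
    (hconv : ∀ a : ℝ, 0 < a → ∀ f : BoundedContinuousFunction ℝ ℝ,
      Tendsto (fun n : ℕ => ∫ ω, f ((a ^ (1 / α) * r ^ (-(n : ℤ))) * X n ω) ∂μ)
        atTop (𝓝 (∫ ω, f (L ω) ∂μ))) :
    (∀ a : ℝ, 0 < a → ∀ᵐ ω ∂μ, L ω = 0 ∨ ∃ k : ℤ, L ω = a ^ (1 / α) * r ^ k) ∧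
    ∀ᵐ ω ∂μ, L ω = 0 := by
  have hsupp (a : ℝ) (ha : 0 < a) :
      ∀ᵐ ω ∂μ, L ω = 0 ∨ ∃ k : ℤ, L ω = a ^ (1 / α) * r ^ k := by
    refine ae_mem_of_tendsto_integral_comp hmeasL.aemeasurable
      (isClosed_setOf_eq_zero_or_eq_mul_zpow (Real.rpow_pos_of_pos ha _) hr0 hr1)
      (.of_forall fun n => ?_) (hconv a ha)
    filter_upwards [hlat n] with ω ⟨k, hk⟩
    exact .inr ⟨-n + k, by rw [hk, mul_assoc, zpow_add₀ hr0.ne']⟩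
  refine ⟨hsupp, ?_⟩
  have hhalf : (r ^ (α / 2)) ^ (1 / α) = r ^ (1 / 2 : ℝ) := by
    rw [← Real.rpow_mul hr0.le]
    congr 1
    field_simp [hα.ne]
  filter_upwards [hsupp 1 one_pos, hsupp _ (Real.rpow_pos_of_pos hr0 (α / 2))]
    with ω h₁ h₂
  rw [hhalf] at h₂
  rcases h₁ with h₁ | ⟨k, hk⟩
  · exact h₁
  rcases h₂ with h₂ | ⟨m, hm⟩
  · exact h₂
  rw [Real.one_rpow, one_mul] at hk
  exact absurd (hk.symm.trans hm) (zpow_ne_rpow_half_mul_zpow hr0 hr1.ne k m)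

/-- Non-convergence step for geometric fragmentations.  Suppose `X n` takes values a.s.
in the multiplicative lattice `r^ℤ` and, for every `a > 0`, along the subsequence
`ε_n = a r^{−αn}` (so that `ε_n^{1/α} = a^{1/α} r^{−n}`), the variables
`ε_n^{1/α} X n` converge in distribution to `L`.  Then `L` is supported on
`a^{1/α} r^ℤ ∪ {0}` for every `a > 0`, and consequently `L = 0` almost surely. -/
theorem stmt13
    {Ω : Type*} [MeasurableSpace Ω] (μ : Measure Ω) [IsProbabilityMeasure μ]
    (α r : ℝ) (hα : α < 0) (hr0 : 0 < r) (hr1 : r < 1)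
    (X : ℕ → Ω → ℝ) (hmeasX : ∀ n, Measurable (X n))
    (L : Ω → ℝ) (hmeasL : Measurable L)
    (hlat : ∀ n, ∀ᵐ ω ∂μ, ∃ k : ℤ, X n ω = r ^ k)
    (hconv : ∀ a : ℝ, 0 < a → ∀ f : BoundedContinuousFunction ℝ ℝ,
      Tendsto (fun n : ℕ => ∫ ω, f ((a ^ (1 / α) * r ^ (-(n : ℤ))) * X n ω) ∂μ)
        atTop (𝓝 (∫ ω, f (L ω) ∂μ))) :
    (∀ a : ℝ, 0 < a → ∀ᵐ ω ∂μ, L ω = 0 ∨ ∃ k : ℤ, L ω = a ^ (1 / α) * r ^ k) ∧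
    ∀ᵐ ω ∂μ, L ω = 0 :=
  stmt13_general μ α r hα hr0 hr1 X L hmeasL hlat hconv
end

section
/- Let (c_n)_{n ∈ ℕ ∪ {∞}} be real-valued nondecreasing piecewise-constant càdlàg functions on [0,∞) defined by c_n(0) = 0 and c_n(t) = b_n(k) for r_n(k+1) ≤ t < r_n(k), where for each n, (r_n(k))_{k∈ℤ} is strictly decreasing in k with r_n(k) → 0 as k → +∞ and r_n(k) → ∞ as k → −∞. If r_n(k) → r_∞(k) and b_n(k) → b_∞(k) as n → ∞ for every k ∈ ℤ, then c_n → c_∞ in the Skorokhod J₁ topology on càdlàg functions [0,∞) → ℝ. -/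
/-!
Near a time `t > 0` all the functions are, for large `n`, two-step functions: with `k` such that
`r∞(k+1) ≤ t < r∞(k)`, eventually `c_n = b_n(k)` to the right of `r_n(k+1)` and
`c_n = b_n(k+1)` to its left on a fixed neighbourhood of `t`. If `t` is not a jump of `c∞` the
left step is eventually invisible and `c_n(t_n) → b∞(k) = c∞(t)` along every `t_n → t`. At a jump
`t = r∞(k+1)`, `c_n(t_n)` is one of `b_n(k) → c∞(t)` and `b_n(k+1) → c∞(t−)`, and moving the point
to the right (left) can only switch the value from the left (right) step to the other one. At
`t = 0`, monotonicity squeezes `0 ≤ c_n(t_n) ≤ b_n(K)` for any fixed `K`, and `b∞(K) → 0`.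
-/

open Filter Topology

/-- Skorokhod convergence of real-valued càdlàg functions on `[0,∞)`, via the
Ethier–Kurtz sequential characterisation (Proposition 3.6.5 of Ethier–Kurtz):
for all sequences `t_n → t ≥ 0`,
(a) `min(|f_n(t_n) − g(t)|, |f_n(t_n) − g(t−)|) → 0`;
(b) if `f_n(t_n) → g(t)`, then `f_n(s_n) → g(t)` for every `s_n → t` with `s_n ≥ t_n`;
(c) if `f_n(t_n) → g(t−)`, then `f_n(s_n) → g(t−)` for every `s_n → t` with `s_n ≤ t_n`. -/
def SkorokhodTendsto (f : ℕ → ℝ → ℝ) (g : ℝ → ℝ) : Prop :=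
  ∀ t : ℝ, 0 ≤ t → ∀ tseq : ℕ → ℝ, (∀ n, 0 ≤ tseq n) → Tendsto tseq atTop (𝓝 t) →
    (Tendsto (fun n => min |f n (tseq n) - g t| |f n (tseq n) - Function.leftLim g t|)
        atTop (𝓝 0)) ∧
    (Tendsto (fun n => f n (tseq n)) atTop (𝓝 (g t)) →
      ∀ sseq : ℕ → ℝ, (∀ n, tseq n ≤ sseq n) → Tendsto sseq atTop (𝓝 t) →
        Tendsto (fun n => f n (sseq n)) atTop (𝓝 (g t))) ∧
    (Tendsto (fun n => f n (tseq n)) atTop (𝓝 (Function.leftLim g t)) →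
      ∀ sseq : ℕ → ℝ, (∀ n, sseq n ≤ tseq n) → Tendsto sseq atTop (𝓝 t) →
        Tendsto (fun n => f n (sseq n)) atTop (𝓝 (Function.leftLim g t)))

open Function Set

/-- The conditions of `SkorokhodTendsto` at one time `t`, with `a` and `a'` in the roles of
`g t` and `g (t-)`. -/
def SkorokhodConditionsAt (f : ℕ → ℝ → ℝ) (t a a' : ℝ) : Prop :=
  ∀ tseq : ℕ → ℝ, Tendsto tseq atTop (𝓝 t) →
    (Tendsto (fun n => min |f n (tseq n) - a| |f n (tseq n) - a'|) atTop (𝓝 0)) ∧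
    (Tendsto (fun n => f n (tseq n)) atTop (𝓝 a) →
      ∀ sseq : ℕ → ℝ, (∀ n, tseq n ≤ sseq n) → Tendsto sseq atTop (𝓝 t) →
        Tendsto (fun n => f n (sseq n)) atTop (𝓝 a)) ∧
    (Tendsto (fun n => f n (tseq n)) atTop (𝓝 a') →
      ∀ sseq : ℕ → ℝ, (∀ n, sseq n ≤ tseq n) → Tendsto sseq atTop (𝓝 t) →
        Tendsto (fun n => f n (sseq n)) atTop (𝓝 a'))

theorem skorokhodTendsto_of_forall_conditionsAt {f : ℕ → ℝ → ℝ} {g : ℝ → ℝ}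
    (h : ∀ t, 0 ≤ t → SkorokhodConditionsAt f t (g t) (leftLim g t)) :
    SkorokhodTendsto f g :=
  fun t ht tseq _ htseq => h t ht tseq htseq

theorem skorokhodConditionsAt_of_tendsto {f : ℕ → ℝ → ℝ} {t a : ℝ}
    (h : ∀ s : ℕ → ℝ, Tendsto s atTop (𝓝 t) → Tendsto (fun n => f n (s n)) atTop (𝓝 a)) :
    SkorokhodConditionsAt f t a a := by
  refine fun tseq htseq => ⟨?_, fun _ sseq _ hs => h sseq hs, fun _ sseq _ hs => h sseq hs⟩
  simpa using ((h tseq htseq).sub_const a).abs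

theorem tendsto_of_eventually_eq_or {ι X : Type*} [TopologicalSpace X] {l : Filter ι}
    {f g h : ι → X} {a : X} (hfgh : ∀ᶠ n in l, f n = g n ∨ f n = h n)
    (hg : Tendsto g l (𝓝 a)) (hh : Tendsto h l (𝓝 a)) : Tendsto f l (𝓝 a) := by
  refine fun U hU => mem_map.2 ?_
  filter_upwards [hfgh, mem_map.1 (hg hU), mem_map.1 (hh hU)] with n hn hgn hhn
  rcases hn with hfg | hfh
  · rwa [mem_preimage, hfg]
  · rwa [mem_preimage, hfh]

theorem skorokhodConditionsAt_of_step {f : ℕ → ℝ → ℝ} {t a a' : ℝ} {ρ u v : ℕ → ℝ}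
    (hu : Tendsto u atTop (𝓝 a)) (hv : Tendsto v atTop (𝓝 a'))
    (hstep : ∀ s : ℕ → ℝ, Tendsto s atTop (𝓝 t) →
      ∀ᶠ n in atTop, (ρ n ≤ s n → f n (s n) = u n) ∧ (s n < ρ n → f n (s n) = v n)) :
    SkorokhodConditionsAt f t a a' := by
  intro tseq htseq
  refine ⟨?_, fun ha sseq hle hs => ?_, fun ha' sseq hle hs => ?_⟩
  · refine squeeze_zero' (g := fun n => max |u n - a| |v n - a'|)
      (.of_forall fun n => le_min (abs_nonneg _) (abs_nonneg _)) ((hstep tseq htseq).mono ?_) ?_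
    · intro n hn
      rcases le_or_gt (ρ n) (tseq n) with h | h
      · rw [hn.1 h]; exact (min_le_left _ _).trans (le_max_left _ _)
      · rw [hn.2 h]; exact (min_le_right _ _).trans (le_max_right _ _)
    · simpa using ((hu.sub_const a).abs).max ((hv.sub_const a').abs)
  · refine tendsto_of_eventually_eq_or ?_ hu ha
    filter_upwards [hstep tseq htseq, hstep sseq hs] with n hnt hns
    rcases le_or_gt (ρ n) (sseq n) with h | h
    · exact .inl (hns.1 h)
    · exact .inr ((hns.2 h).trans (hnt.2 ((hle n).trans_lt h)).symm)
  · refine tendsto_of_eventually_eq_or ?_ hv ha'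
    filter_upwards [hstep tseq htseq, hstep sseq hs] with n hnt hns
    rcases le_or_gt (ρ n) (sseq n) with h | h
    · exact .inr ((hns.1 h).trans (hnt.1 (h.trans (hle n))).symm)
    · exact .inl (hns.2 h)

theorem StrictAnti.lt_of_tendsto {α β : Type*} [TopologicalSpace α] [Preorder α]
    [OrderClosedTopology α] [PartialOrder β] [IsDirectedOrder β] [NoMaxOrder β] {f : β → α} {a : α}
    (hf : StrictAnti f) (ha : Tendsto f atTop (𝓝 a)) (b : β) : a < f b := by
  obtain ⟨b', hb⟩ := exists_gt b
  exact (hf.antitone.le_of_tendsto ha b').trans_lt (hf hb)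

theorem Int.exists_apply_add_one_le_lt {α : Type*} [LinearOrder α] [TopologicalSpace α]
    [OrderTopology α] [NoMaxOrder α] {f : ℤ → α} {a t : α} (htop : Tendsto f atTop (𝓝 a))
    (hat : a < t) (hbot : Tendsto f atBot atTop) : ∃ k, f (k + 1) ≤ t ∧ t < f k := by
  obtain ⟨k, hk, hmax⟩ : ∃ k, t < f k ∧ ∀ z, t < f z → z ≤ k := by
    refine Int.exists_greatest_of_bdd ?_ (hbot.eventually (eventually_gt_atTop t)).exists
    obtain ⟨N, hN⟩ := eventually_atTop.1 (htop.eventually_lt_const hat)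
    exact ⟨N, fun z hz => not_lt.1 fun hNz => (hN z hNz.le).not_gt hz⟩
  exact ⟨k, not_lt.1 fun h => (hmax _ h).not_gt (lt_add_one k), hk⟩

theorem leftLim_eq_of_eqOn_Ioo {α β : Type*} [LinearOrder α] [TopologicalSpace α]
    [OrderTopology α] [DenselyOrdered α] [TopologicalSpace β] [T2Space β]
    {f : α → β} {x t : α} {y : β} (hxt : x < t) (h : EqOn f (fun _ => y) (Ioo x t)) :
    leftLim f t = y :=
  haveI : (𝓝[<] t).NeBot := nhdsLT_neBot_of_exists_lt ⟨x, hxt⟩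
  leftLim_eq_of_tendsto (tendsto_const_nhds.congr' (eventuallyEq_of_mem (Ioo_mem_nhdsLT hxt)
    fun _ hz => (h hz).symm))

theorem Monotone.le_of_eqOn_Ico {α β : Type*} [LinearOrder α] [Preorder β] {f : α → β}
    {x y s : α} {b : β} (hf : Monotone f) (hxy : x < y)
    (h : EqOn f (fun _ => b) (Ico x y)) (hs : s < y) : f s ≤ b :=
  (hf (le_max_left s x)).trans_eq (h ⟨le_max_right s x, max_lt hs hxy⟩)

theorem tendsto_apply_of_tendsto_zero {r b : ℕ → ℤ → ℝ} {rI bI : ℤ → ℝ} {c : ℕ → ℝ → ℝ}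
    (hr_anti : ∀ n, StrictAnti (r n)) (hrI_pos : ∀ k, 0 < rI k)
    (hc0 : ∀ n, ∀ t : ℝ, t ≤ 0 → c n t = 0)
    (hc : ∀ n, ∀ k : ℤ, ∀ t : ℝ, r n (k + 1) ≤ t → t < r n k → c n t = b n k)
    (hmono : ∀ n, Monotone (c n)) (hbI_top : Tendsto bI atTop (𝓝 0))
    (hr_conv : ∀ k : ℤ, Tendsto (fun n => r n k) atTop (𝓝 (rI k)))
    (hb_conv : ∀ k : ℤ, Tendsto (fun n => b n k) atTop (𝓝 (bI k)))
    {s : ℕ → ℝ} (hs : Tendsto s atTop (𝓝 0)) :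
    Tendsto (fun n => c n (s n)) atTop (𝓝 0) := by
  have hnonneg : ∀ n x, 0 ≤ c n x := fun n x => (le_total x 0).elim (fun h => (hc0 n x h).ge)
    fun h => (hc0 n 0 le_rfl).symm.trans_le (hmono n h)
  refine tendsto_order.2 ⟨fun a ha => .of_forall fun n => ha.trans_le (hnonneg n _), fun ε hε => ?_⟩
  obtain ⟨K, hK⟩ := (hbI_top.eventually_lt_const hε).exists
  filter_upwards [(hb_conv K).eventually_lt_const hK, hs.eventually_lt (hr_conv K) (hrI_pos K)]
    with n hbn hsn
  exact ((hmono n).le_of_eqOn_Ico (hr_anti n (lt_add_one K)) (fun x hx => hc n K x hx.1 hx.2)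
    hsn).trans_lt hbn

theorem skorokhodConditionsAt_of_mem_Ioo {r b : ℕ → ℤ → ℝ} {rI bI : ℤ → ℝ} {c : ℕ → ℝ → ℝ}
    {cI : ℝ → ℝ} (hc : ∀ n, ∀ k : ℤ, ∀ t : ℝ, r n (k + 1) ≤ t → t < r n k → c n t = b n k)
    (hcI : ∀ k : ℤ, ∀ t : ℝ, rI (k + 1) ≤ t → t < rI k → cI t = bI k)
    (hr_conv : ∀ k : ℤ, Tendsto (fun n => r n k) atTop (𝓝 (rI k)))
    (hb_conv : ∀ k : ℤ, Tendsto (fun n => b n k) atTop (𝓝 (bI k)))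
    {k : ℤ} {t : ℝ} (hkt : rI (k + 1) < t) (htk : t < rI k) :
    SkorokhodConditionsAt c t (cI t) (leftLim cI t) := by
  rw [hcI k t hkt.le htk, leftLim_eq_of_eqOn_Ioo hkt fun x hx => hcI k x hx.1.le (hx.2.trans htk)]
  refine skorokhodConditionsAt_of_tendsto fun s hs => (hb_conv k).congr' ?_
  filter_upwards [(hr_conv (k + 1)).eventually_lt hs hkt, hs.eventually_lt (hr_conv k) htk]
    with n hks hsk
  exact (hc n k _ hks.le hsk).symm

theorem skorokhodConditionsAt_jump {r b : ℕ → ℤ → ℝ} {rI bI : ℤ → ℝ} {c : ℕ → ℝ → ℝ}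
    {cI : ℝ → ℝ} (hc : ∀ n, ∀ k : ℤ, ∀ t : ℝ, r n (k + 1) ≤ t → t < r n k → c n t = b n k)
    (hcI : ∀ k : ℤ, ∀ t : ℝ, rI (k + 1) ≤ t → t < rI k → cI t = bI k)
    (hr_conv : ∀ k : ℤ, Tendsto (fun n => r n k) atTop (𝓝 (rI k)))
    (hb_conv : ∀ k : ℤ, Tendsto (fun n => b n k) atTop (𝓝 (bI k)))
    (hrI_anti : StrictAnti rI) (k : ℤ) :
    SkorokhodConditionsAt c (rI (k + 1)) (cI (rI (k + 1))) (leftLim cI (rI (k + 1))) := by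
  have hleft : rI (k + 1 + 1) < rI (k + 1) := hrI_anti (lt_add_one _)
  have hright : rI (k + 1) < rI k := hrI_anti (lt_add_one _)
  rw [hcI k _ le_rfl hright, leftLim_eq_of_eqOn_Ioo hleft fun x hx => hcI (k + 1) x hx.1.le hx.2]
  refine skorokhodConditionsAt_of_step (ρ := fun n => r n (k + 1)) (hb_conv k) (hb_conv (k + 1))
    fun s hs => ?_
  filter_upwards [(hr_conv (k + 1 + 1)).eventually_lt hs hleft, hs.eventually_lt (hr_conv k) hright]
    with n hks hsk
  exact ⟨fun h => hc n k _ h hsk, fun h => hc n (k + 1) _ hks.le h⟩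

theorem stmt14_general
    (r : ℕ → ℤ → ℝ) (b : ℕ → ℤ → ℝ) (rI : ℤ → ℝ) (bI : ℤ → ℝ)
    (c : ℕ → ℝ → ℝ) (cI : ℝ → ℝ)
    (hr_anti : ∀ n, StrictAnti (r n)) (hrI_anti : StrictAnti rI)
    (hrI_top : Tendsto rI atTop (𝓝 0)) (hrI_bot : Tendsto rI atBot atTop)
    (hc0 : ∀ n, ∀ t : ℝ, t ≤ 0 → c n t = 0)
    (hcI0 : ∀ t : ℝ, t ≤ 0 → cI t = 0)
    (hc : ∀ n, ∀ k : ℤ, ∀ t : ℝ, r n (k + 1) ≤ t → t < r n k → c n t = b n k)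
    (hcI : ∀ k : ℤ, ∀ t : ℝ, rI (k + 1) ≤ t → t < rI k → cI t = bI k)
    (hmono : ∀ n, Monotone (c n))
    (hbI_top : Tendsto bI atTop (𝓝 0))
    (hr_conv : ∀ k : ℤ, Tendsto (fun n => r n k) atTop (𝓝 (rI k)))
    (hb_conv : ∀ k : ℤ, Tendsto (fun n => b n k) atTop (𝓝 (bI k))) :
    SkorokhodTendsto c cI := by
  refine skorokhodTendsto_of_forall_conditionsAt fun t ht => ?_
  rcases ht.eq_or_lt with rfl | ht
  · rw [hcI0 0 le_rfl, leftLim_eq_of_eqOn_Ioo neg_one_lt_zero fun x hx => hcI0 x hx.2.le]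
    exact skorokhodConditionsAt_of_tendsto fun s hs => tendsto_apply_of_tendsto_zero hr_anti
      (hrI_anti.lt_of_tendsto hrI_top) hc0 hc hmono hbI_top hr_conv hb_conv hs
  obtain ⟨k, hkt, htk⟩ := Int.exists_apply_add_one_le_lt hrI_top ht hrI_bot
  rcases hkt.eq_or_lt with rfl | hkt
  · exact skorokhodConditionsAt_jump hc hcI hr_conv hb_conv hrI_anti k
  · exact skorokhodConditionsAt_of_mem_Ioo hc hcI hr_conv hb_conv hkt htk

/-- Nondecreasing piecewise-constant càdlàg functions `c n`, equal to `b n k` on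
`[r n (k+1), r n k)` and `0` at (and below) `0`, converge in the Skorokhod topology to
the limit function `cI` of the same form, provided `r n k → rI k` and
`b n k → bI k` for every `k ∈ ℤ`. -/
theorem stmt14
    (r : ℕ → ℤ → ℝ) (b : ℕ → ℤ → ℝ) (rI : ℤ → ℝ) (bI : ℤ → ℝ)
    (c : ℕ → ℝ → ℝ) (cI : ℝ → ℝ)
    (hr_anti : ∀ n, StrictAnti (r n)) (hrI_anti : StrictAnti rI)
    (hr_top : ∀ n, Tendsto (r n) atTop (𝓝 0))
    (hr_bot : ∀ n, Tendsto (r n) atBot atTop)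
    (hrI_top : Tendsto rI atTop (𝓝 0)) (hrI_bot : Tendsto rI atBot atTop)
    (hc0 : ∀ n, ∀ t : ℝ, t ≤ 0 → c n t = 0)
    (hcI0 : ∀ t : ℝ, t ≤ 0 → cI t = 0)
    (hc : ∀ n, ∀ k : ℤ, ∀ t : ℝ, r n (k + 1) ≤ t → t < r n k → c n t = b n k)
    (hcI : ∀ k : ℤ, ∀ t : ℝ, rI (k + 1) ≤ t → t < rI k → cI t = bI k)
    (hmono : ∀ n, Monotone (c n)) (hmonoI : Monotone cI)
    (hb_top : ∀ n, Tendsto (b n) atTop (𝓝 0)) (hbI_top : Tendsto bI atTop (𝓝 0))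
    (hr_conv : ∀ k : ℤ, Tendsto (fun n => r n k) atTop (𝓝 (rI k)))
    (hb_conv : ∀ k : ℤ, Tendsto (fun n => b n k) atTop (𝓝 (bI k))) :
    SkorokhodTendsto c cI :=
  stmt14_general r b rI bI c cI hr_anti hrI_anti hrI_top hrI_bot hc0 hcI0 hc hcI hmono hbI_top
    hr_conv hb_conv
end
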